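/- arXiv:1009.4733 — 15 statements merged into one kernel-verified Lean document; each statement's English description precedes it below -/
import Mathlib

section
/- Let 1 ≤ s ≤ M−1 be an integer threshold. Define the transition matrix P_s on the state space {1,...,M} by: from each state i with 1 ≤ i < s the chain moves to i+1 with probability 1; from each state i with s ≤ i ≤ M−1 it moves to 1 with probability p and to i+1 with probability 1−p; from state M it moves to 1 with probability p and stays at M with probability 1−p. Define π by π_i = π₁ for 1 ≤ i ≤ s, π_i = π₁(1−p)^{i−s} for s < i ≤ M−1, and π_M = π₁(1−p)^{M−s}/p, where π₁ = (s + (1−p)/p)⁻¹. Then π is a stationary probability distribution of P_s: Σ_{i=1}^M π_i = 1 and Σ_{i=1}^M π_i P_s(i,j) = π_j for every j ∈ {1,...,M}. -/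
/-!
State `j ≥ 2` is entered only from `j - 1` (and `M` also from itself), so balance there is a
one-step recursion that the geometric profile of `piDist` satisfies. State `1` is entered from
exactly the states `≥ s`, each with probability `p`, and a geometric sum gives their total mass
`C / p`, where `C = (s + (1 - p) / p)⁻¹`. This is balance at `1`; adding the `s - 1` states below
the threshold, each of mass `C`, gives total mass `C * (s - 1 + 1 / p) = 1`.
-/

open Finset

/-- Transition matrix of the threshold-`s` aging-control chain on states `{1,...,M}`:
below the threshold the age increases deterministically; at or above the threshold the
age resets to `1` with probability `p` and otherwise increases (capped at `M`). -/
noncomputable def Pmat (M s : ℕ) (p : ℝ) (i j : ℕ) : ℝ :=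
  if i < s then (if j = i + 1 then 1 else 0)
  else if i < M then (if j = 1 then p else if j = i + 1 then 1 - p else 0)
  else (if j = 1 then p else if j = M then 1 - p else 0)

/-- Candidate stationary distribution of the threshold-`s` chain. -/
noncomputable def piDist (M s : ℕ) (p : ℝ) (i : ℕ) : ℝ :=
  if i ≤ s then ((s : ℝ) + (1 - p) / p)⁻¹
  else if i ≤ M - 1 then ((s : ℝ) + (1 - p) / p)⁻¹ * (1 - p) ^ (i - s)
  else ((s : ℝ) + (1 - p) / p)⁻¹ * (1 - p) ^ (M - s) / p

section

variable {M s : ℕ} {p : ℝ} {i j : ℕ}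

theorem Pmat_apply_one (hi : 0 < i) : Pmat M s p i 1 = if s ≤ i then p else 0 := by
  unfold Pmat
  split_ifs <;> first | rfl | omega

theorem Pmat_eq_zero (hiM : i < M) (hj1 : j ≠ 1) (hij : j ≠ i + 1) : Pmat M s p i j = 0 := by
  unfold Pmat
  split_ifs <;> rfl

theorem Pmat_succ_of_lt (hi : i < s) : Pmat M s p i (i + 1) = 1 := by
  simp [Pmat, hi]

theorem Pmat_succ_of_le_of_lt (hi : 0 < i) (hsi : s ≤ i) (hiM : i < M) :
    Pmat M s p i (i + 1) = 1 - p := by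
  simp [Pmat, hsi.not_gt, hiM, hi.ne']

theorem Pmat_top (hsM : s ≤ M) (hj1 : j ≠ 1) : Pmat M s p M j = if j = M then 1 - p else 0 := by
  simp [Pmat, hsM.not_gt, hj1]

theorem piDist_of_le (hi : i ≤ s) : piDist M s p i = ((s : ℝ) + (1 - p) / p)⁻¹ :=
  if_pos hi

theorem piDist_of_le_of_lt (hsi : s ≤ i) (hiM : i < M) :
    piDist M s p i = ((s : ℝ) + (1 - p) / p)⁻¹ * (1 - p) ^ (i - s) := by
  rcases hsi.eq_or_lt with rfl | hsi
  · simp [piDist]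
  · rw [piDist, if_neg hsi.not_ge, if_pos (by omega)]

theorem piDist_top (hsM : s < M) :
    piDist M s p M = ((s : ℝ) + (1 - p) / p)⁻¹ * (1 - p) ^ (M - s) / p := by
  rw [piDist, if_neg hsM.not_ge, if_neg (by omega)]

theorem sum_Icc_eq_sum_Ico_add_sum_Icc {β : Type*} [AddCommMonoid β] (f : ℕ → β) {a b c : ℕ}
    (hab : a ≤ b) (hbc : b ≤ c + 1) :
    ∑ i ∈ Icc a c, f i = ∑ i ∈ Ico a b, f i + ∑ i ∈ Icc b c, f i := by
  simp only [← Ico_add_one_right_eq_Icc, sum_Ico_consecutive f hab hbc]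

theorem sum_Icc_piDist_tail (hp : p ≠ 0) (hsM : s < M) :
    ∑ i ∈ Icc s M, piDist M s p i = ((s : ℝ) + (1 - p) / p)⁻¹ / p := by
  have hgeom : ∑ k ∈ range (M - s), (1 - p) ^ k = (1 - (1 - p) ^ (M - s)) / p :=
    eq_div_of_mul_eq hp (by simpa using geom_sum_mul_neg (1 - p) (M - s))
  have hbody : ∑ i ∈ Ico s M, piDist M s p i
      = ((s : ℝ) + (1 - p) / p)⁻¹ * ((1 - (1 - p) ^ (M - s)) / p) := by
    rw [sum_Ico_eq_sum_range, ← hgeom, mul_sum]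
    refine sum_congr rfl fun k hk => ?_
    rw [piDist_of_le_of_lt (by omega) (by simp at hk; omega), Nat.add_sub_cancel_left]
  rw [← Ico_add_one_right_eq_Icc, sum_Ico_succ_top hsM.le, hbody, piDist_top hsM]
  field_simp
  ring

theorem sum_piDist (hp : 0 < p) (hs : 1 ≤ s) (hsM : s < M) :
    ∑ i ∈ Icc 1 M, piDist M s p i = 1 := by
  have hhead : ∑ i ∈ Ico 1 s, piDist M s p i = ((s : ℝ) - 1) * ((s : ℝ) + (1 - p) / p)⁻¹ := by
    rw [sum_congr rfl fun i hi => piDist_of_le (mem_Ico.mp hi).2.le, sum_const, Nat.card_Ico,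
      nsmul_eq_mul, Nat.cast_sub hs, Nat.cast_one]
  have hnorm : (s : ℝ) + (1 - p) / p ≠ 0 := by
    have : (1 : ℝ) ≤ s := by exact_mod_cast hs
    rw [show (s : ℝ) + (1 - p) / p = s - 1 + 1 / p by field_simp; ring]
    positivity
  rw [sum_Icc_eq_sum_Ico_add_sum_Icc _ hs (by omega), hhead, sum_Icc_piDist_tail hp.ne' hsM,
    show ∀ C : ℝ, (s - 1) * C + C / p = C * (s + (1 - p) / p) by intro C; field_simp; ring,
    inv_mul_cancel₀ hnorm]

theorem sum_piDist_mul_Pmat_one (hp : p ≠ 0) (hs : 1 ≤ s) (hsM : s < M) :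
    ∑ i ∈ Icc 1 M, piDist M s p i * Pmat M s p i 1 = piDist M s p 1 := by
  rw [sum_Icc_eq_sum_Ico_add_sum_Icc _ hs (by omega)]
  have hhead : ∀ i ∈ Ico 1 s, piDist M s p i * Pmat M s p i 1 = 0 := fun i hi => by
    obtain ⟨hi1, his⟩ := mem_Ico.mp hi
    rw [Pmat_apply_one hi1, if_neg his.not_ge, mul_zero]
  have htail : ∀ i ∈ Icc s M, piDist M s p i * Pmat M s p i 1 = piDist M s p i * p :=
    fun i hi => by rw [Pmat_apply_one (by simp at hi; omega), if_pos (mem_Icc.mp hi).1]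
  rw [sum_eq_zero hhead, sum_congr rfl htail, ← sum_mul, sum_Icc_piDist_tail hp hsM,
    piDist_of_le hs, zero_add, div_mul_cancel₀ _ hp]

theorem sum_mul_Pmat_of_two_le (f : ℕ → ℝ) (hj : 2 ≤ j) (hjM : j ≤ M) :
    ∑ i ∈ Icc 1 M, f i * Pmat M s p i j
      = f (j - 1) * Pmat M s p (j - 1) j + f M * Pmat M s p M j := by
  obtain ⟨N, rfl⟩ : ∃ N, M = N + 1 := ⟨M - 1, by omega⟩
  rw [sum_Icc_succ_top (by omega)]
  congr 1
  refine sum_eq_single_of_mem _ (by simp; omega) fun i hi hij => ?_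
  rw [Pmat_eq_zero (by simp at hi; omega) (by omega) (by omega), mul_zero]

theorem piDist_pred_mul_Pmat (hj : 2 ≤ j) (hjM : j < M) :
    piDist M s p (j - 1) * Pmat M s p (j - 1) j = piDist M s p j := by
  obtain ⟨i, rfl⟩ : ∃ i, j = i + 1 := ⟨j - 1, by omega⟩
  rw [Nat.add_sub_cancel]
  rcases lt_or_ge i s with his | hsi
  · rw [Pmat_succ_of_lt his, mul_one, piDist_of_le his.le, piDist_of_le his]
  · rw [Pmat_succ_of_le_of_lt (by omega) hsi (by omega), piDist_of_le_of_lt hsi (by omega),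
      piDist_of_le_of_lt (by omega) hjM, Nat.sub_add_comm hsi, pow_succ, mul_assoc]

theorem piDist_pred_mul_Pmat_add_piDist_mul_Pmat_top (hp : p ≠ 0) (hs : 1 ≤ s) (hsM : s < M) :
    piDist M s p (M - 1) * Pmat M s p (M - 1) M + piDist M s p M * Pmat M s p M M
      = piDist M s p M := by
  obtain ⟨N, rfl⟩ : ∃ N, M = N + 1 := ⟨M - 1, by omega⟩
  rw [Nat.add_sub_cancel, Pmat_succ_of_le_of_lt (by omega) (by omega) (by omega),
    Pmat_top hsM.le (by omega), if_pos rfl, piDist_of_le_of_lt (by omega) (by omega),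
    piDist_top hsM, Nat.sub_add_comm (by omega), pow_succ]
  field_simp
  ring

end

theorem piDist_stationary_general (M s : ℕ) (p : ℝ)
    (hp : 0 < p)
    (hs1 : 1 ≤ s) (hsM : s ≤ M - 1) :
    (∑ i ∈ Finset.Icc 1 M, piDist M s p i) = 1 ∧
    ∀ j ∈ Finset.Icc 1 M,
      (∑ i ∈ Finset.Icc 1 M, piDist M s p i * Pmat M s p i j) = piDist M s p j := by
  have hsltM : s < M := by omega
  refine ⟨sum_piDist hp hs1 hsltM, fun j hj => ?_⟩
  obtain ⟨hj1, hjM⟩ := mem_Icc.mp hj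
  rcases hj1.eq_or_lt with rfl | hj2
  · exact sum_piDist_mul_Pmat_one hp.ne' hs1 hsltM
  rw [sum_mul_Pmat_of_two_le _ hj2 hjM]
  rcases hjM.eq_or_lt with rfl | hjM
  · exact piDist_pred_mul_Pmat_add_piDist_mul_Pmat_top hp.ne' hs1 hsltM
  · rw [Pmat_top hsltM.le (by omega), if_neg hjM.ne, mul_zero, add_zero,
      piDist_pred_mul_Pmat hj2 hjM]

/-- `piDist` is a stationary probability distribution of `Pmat`. -/
theorem piDist_stationary (M s : ℕ) (p : ℝ)
    (hM : 2 ≤ M) (hp : 0 < p) (hp1 : p < 1)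
    (hs1 : 1 ≤ s) (hsM : s ≤ M - 1) :
    (∑ i ∈ Finset.Icc 1 M, piDist M s p i) = 1 ∧
    ∀ j ∈ Finset.Icc 1 M,
      (∑ i ∈ Finset.Icc 1 M, piDist M s p i * Pmat M s p i j) = piDist M s p j :=
  piDist_stationary_general M s p hp hs1 hsM
end

section
/- For every integer s with 2 ≤ s ≤ M, the following identity holds: (s−1 + (1−p)/p)·E(s−1) − (s + (1−p)/p)·E(s) = −p · Σ_{i=1}^{M−s} U(i+s−1)(1−p)^{i−1}. -/
open Finset

/-! The identity is pure bookkeeping: multiplying `E(s)` by its normalising factor leaves a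
numerator whose head sum `Σ_{1 ≤ x < s} U x` gains the term `U(s-1)` when passing from `s - 1` to `s`,
while its discounted tail satisfies `T(s-1) = U(s-1) + (1-p) T(s)`; the two `U(s-1)` cancel and
`(1-p) T(s) - T(s) = -p T(s)`. -/

/-- Expected average reward `E(s)` of the threshold-`s` policy, for `1 ≤ s ≤ M`;
`E(M+1) = 0` corresponds to the always-inactive policy. -/
noncomputable def Ereward (M : ℕ) (p G P B : ℝ) (U : ℕ → ℝ) (s : ℕ) : ℝ :=
  if s = M + 1 then 0
  else ((s : ℝ) + (1 - p) / p)⁻¹ *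
    ((∑ x ∈ Finset.Icc 1 (s - 1), U x)
      + (∑ i ∈ Finset.range (M - s), U (s + i) * (1 - p) ^ i)
      - G / p - P + B)

lemma sum_range_succ_mul_pow_shift {R : Type*} [CommSemiring R] (f : ℕ → R) (q : R) (k n : ℕ) :
    ∑ i ∈ range (n + 1), f (k + i) * q ^ i
      = f k + q * ∑ i ∈ range n, f (k + 1 + i) * q ^ i := by
  rw [sum_range_succ', mul_sum, add_comm]
  congr 1
  · simp
  · refine sum_congr rfl fun i _ => ?_
    rw [add_assoc, add_comm 1 i, pow_succ]
    ring

lemma sum_Icc_one_mul_pow_pred {R : Type*} [CommSemiring R] (f : ℕ → R) (q : R) (s n : ℕ) :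
    ∑ i ∈ Icc 1 n, f (i + s - 1) * q ^ (i - 1) = ∑ i ∈ range n, f (s + i) * q ^ i := by
  rw [← Ico_add_one_right_eq_Icc, sum_Ico_eq_sum_range, add_tsub_cancel_right]
  refine sum_congr rfl fun i _ => ?_
  rw [show 1 + i + s - 1 = s + i by omega, add_tsub_cancel_left]

section RewardNumerator

variable (M : ℕ) (p G P B : ℝ) (U : ℕ → ℝ)

noncomputable def rewardNumerator (s : ℕ) : ℝ :=
  (∑ x ∈ Icc 1 (s - 1), U x) + (∑ i ∈ range (M - s), U (s + i) * (1 - p) ^ i) - G / p - P + B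

lemma mul_Ereward_eq_rewardNumerator {s : ℕ} (hs : s ≠ M + 1)
    (hc : (s : ℝ) + (1 - p) / p ≠ 0) :
    ((s : ℝ) + (1 - p) / p) * Ereward M p G P B U s = rewardNumerator M p G P B U s := by
  rw [Ereward, if_neg hs, mul_inv_cancel_left₀ hc, rewardNumerator]

lemma rewardNumerator_sub_rewardNumerator_succ {k : ℕ} (hk : 1 ≤ k) (hkM : k + 1 ≤ M) :
    rewardNumerator M p G P B U k - rewardNumerator M p G P B U (k + 1)
      = -p * ∑ i ∈ range (M - (k + 1)), U (k + 1 + i) * (1 - p) ^ i := by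
  have head : ∑ x ∈ Icc 1 k, U x = ∑ x ∈ Icc 1 (k - 1), U x + U k := by
    conv_lhs => rw [← Nat.sub_add_cancel hk]
    rw [sum_Icc_succ_top (by omega), Nat.sub_add_cancel hk]
  have tail : ∑ i ∈ range (M - k), U (k + i) * (1 - p) ^ i
      = U k + (1 - p) * ∑ i ∈ range (M - (k + 1)), U (k + 1 + i) * (1 - p) ^ i := by
    rw [show M - k = M - (k + 1) + 1 by omega, sum_range_succ_mul_pow_shift]
  rw [rewardNumerator, rewardNumerator, tail, Nat.add_sub_cancel, head]
  ring

end RewardNumerator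

theorem reward_difference_identity_general (M s : ℕ) (p G P B : ℝ) (U : ℕ → ℝ)
    (hp : 0 < p)
    (hs : 2 ≤ s) (hsM : s ≤ M) :
    ((s : ℝ) - 1 + (1 - p) / p) * Ereward M p G P B U (s - 1)
      - ((s : ℝ) + (1 - p) / p) * Ereward M p G P B U s
    = -p * ∑ i ∈ Finset.Icc 1 (M - s), U (i + s - 1) * (1 - p) ^ (i - 1) := by
  obtain ⟨k, rfl⟩ : ∃ k, s = k + 1 := ⟨s - 1, by omega⟩
  have hden : ∀ j : ℕ, 1 ≤ j → (j : ℝ) + (1 - p) / p ≠ 0 := fun j hj => by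
    have hj' : (1 : ℝ) ≤ j := by exact_mod_cast hj
    have : (1 - p) / p = 1 / p - 1 := by field_simp
    have : 0 < 1 / p := by positivity
    linarith
  have hcast : ((k + 1 : ℕ) : ℝ) - 1 = (k : ℝ) := by push_cast; ring
  rw [Nat.add_sub_cancel, hcast,
    mul_Ereward_eq_rewardNumerator M p G P B U (by omega) (hden k (by omega)),
    mul_Ereward_eq_rewardNumerator M p G P B U (by omega) (hden (k + 1) (by omega)),
    rewardNumerator_sub_rewardNumerator_succ M p G P B U (by omega) hsM,
    sum_Icc_one_mul_pow_pred]

/-- The identity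
`(s−1+(1−p)/p)·E(s−1) − (s+(1−p)/p)·E(s) = −p Σ_{i=1}^{M−s} U(i+s−1)(1−p)^{i−1}`. -/
theorem reward_difference_identity (M s : ℕ) (p G P B : ℝ) (U : ℕ → ℝ)
    (hM : 2 ≤ M) (hp : 0 < p) (hp1 : p < 1)
    (hs : 2 ≤ s) (hsM : s ≤ M)
    (hU : ∀ ⦃x y : ℕ⦄, 1 ≤ x → x ≤ y → y ≤ M → U y ≤ U x)
    (hUM : U M = 0) :
    ((s : ℝ) - 1 + (1 - p) / p) * Ereward M p G P B U (s - 1)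
      - ((s : ℝ) + (1 - p) / p) * Ereward M p G P B U s
    = -p * ∑ i ∈ Finset.Icc 1 (M - s), U (i + s - 1) * (1 - p) ^ (i - 1) :=
  reward_difference_identity_general M s p G P B U hp hs hsM
end

section
/- Let s* ∈ {1,...,M+1} be a maximizer of E over {1,...,M+1}, i.e. E(s*) ≥ E(t) for all t ∈ {1,...,M+1}. Then E is unimodal around s*: for every integer s with 1 ≤ s ≤ s*−1 one has E(s) ≤ E(s+1), and for every integer s with s* ≤ s ≤ M one has E(s) ≥ E(s+1). -/
open Finset

/-!
For `1 ≤ s ≤ M` the reward is a ratio `E(s) = N(s) / D(s)` with `D(s+1) = D(s) + 1` and, for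
`s < M`, `N(s+1) = N(s) + m(s)`, where `m(s) = p T(s+1)` and `T` is the discounted tail sum of `U`
(which satisfies `T(s) = U(s) + (1-p) T(s+1)`). So `E(s+1)` is the mediant of `E(s)` and `m(s)`:
`E` moves toward the marginal `m` without crossing it, and the step to the inactive policy,
`E(M+1) = 0 = m(M)`, moves toward `m` as well. Since `U` is nonincreasing and vanishes at `M`,
the marginal `m` is nonincreasing. Hence once `E` drops it has passed above `m`, stays above the
smaller later marginals and keeps dropping; symmetrically, a rise of `E` propagates backwards.
A strict drop before a maximizer or a strict rise after one would therefore produce a value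
exceeding the maximum.
-/

open SignType

/-- Each step moves `E` toward the antitone marginal `m`, strictly before `b` without reaching
or crossing it. -/
structure AvgMarginal {α : Type*} [AddCommGroup α] [LinearOrder α] (E m : ℕ → α) (a b : ℕ) :
    Prop where
  marginal_succ_le : ∀ s, a ≤ s → s < b → m (s + 1) ≤ m s
  sign_succ_sub : ∀ s, a ≤ s → s ≤ b → sign (E (s + 1) - E s) = sign (m s - E s)
  sign_succ_sub' : ∀ s, a ≤ s → s < b → sign (E (s + 1) - E s) = sign (m s - E (s + 1))

section SignLemmas

variable {α : Type*}

lemma neg_iff_neg_of_sign_eq [Zero α] [Preorder α] [DecidableLT α] {x y : α}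
    (h : sign x = sign y) : x < 0 ↔ y < 0 := by
  rw [← sign_eq_neg_one_iff, h, sign_eq_neg_one_iff]

lemma pos_iff_pos_of_sign_eq [Zero α] [Preorder α] [DecidableLT α] {x y : α}
    (h : sign x = sign y) : 0 < x ↔ 0 < y := by
  rw [← sign_eq_one_iff, h, sign_eq_one_iff]

variable [Field α] [LinearOrder α] [IsStrictOrderedRing α]

lemma sign_div_of_pos {x c : α} (hc : 0 < c) : sign (x / c) = sign x := by
  rw [div_eq_mul_inv, sign_mul, sign_pos (inv_pos.2 hc), mul_one]

lemma sign_div_add_one_sub_div {N x D : α} (hD : 0 < D) :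
    sign ((N + x) / (D + 1) - N / D) = sign (x - N / D) ∧
      sign ((N + x) / (D + 1) - N / D) = sign (x - (N + x) / (D + 1)) := by
  have hD1 : 0 < D + 1 := by linarith
  have h1 : (N + x) / (D + 1) - N / D = (x - N / D) / (D + 1) := by field_simp; ring
  have h2 : (N + x) / (D + 1) - N / D = (x - (N + x) / (D + 1)) / D := by field_simp; ring
  exact ⟨by rw [h1, sign_div_of_pos hD1], by rw [h2, sign_div_of_pos hD]⟩

end SignLemmas

namespace AvgMarginal

variable {α : Type*} [AddCommGroup α] [LinearOrder α] [IsOrderedAddMonoid α]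
  {E m : ℕ → α} {a b : ℕ}

lemma succ_succ_lt_succ_of_succ_lt (h : AvgMarginal E m a b) {s : ℕ} (has : a ≤ s) (hsb : s < b)
    (hlt : E (s + 1) < E s) : E (s + 2) < E (s + 1) := by
  have hm : m s < E (s + 1) :=
    sub_neg.1 ((neg_iff_neg_of_sign_eq (h.sign_succ_sub' s has hsb)).1 (sub_neg.2 hlt))
  have hm' : m (s + 1) < E (s + 1) := (h.marginal_succ_le s has hsb).trans_lt hm
  exact sub_neg.1 ((neg_iff_neg_of_sign_eq (h.sign_succ_sub (s + 1) (by omega) hsb)).2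
    (sub_neg.2 hm'))

lemma lt_succ_of_succ_lt_succ_succ (h : AvgMarginal E m a b) {s : ℕ} (has : a ≤ s) (hsb : s < b)
    (hlt : E (s + 1) < E (s + 2)) : E s < E (s + 1) := by
  have hm' : E (s + 1) < m (s + 1) :=
    sub_pos.1 ((pos_iff_pos_of_sign_eq (h.sign_succ_sub (s + 1) (by omega) hsb)).1 (sub_pos.2 hlt))
  have hm : E (s + 1) < m s := hm'.trans_le (h.marginal_succ_le s has hsb)
  exact sub_pos.1 ((pos_iff_pos_of_sign_eq (h.sign_succ_sub' s has hsb)).2 (sub_pos.2 hm))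

lemma strictAntiOn_of_succ_lt (h : AvgMarginal E m a b) {t : ℕ} (hat : a ≤ t)
    (hlt : E (t + 1) < E t) : StrictAntiOn E (Set.Icc t (b + 1)) := by
  refine _root_.strictAntiOn_of_succ_lt Set.ordConnected_Icc fun u hu_max hu hu1 ↦ ?_
  rw [Order.succ_eq_add_one] at hu1 ⊢
  have hub : u ≤ b := by have := hu1.2; omega
  clear hu_max hu1
  induction u, hu.1 using Nat.le_induction with
  | base => exact hlt
  | succ u htu ih =>
    exact h.succ_succ_lt_succ_of_succ_lt (hat.trans htu) hub (ih ⟨htu, by omega⟩ (by omega))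

lemma strictMonoOn_of_lt_succ (h : AvgMarginal E m a b) {t : ℕ} (htb : t ≤ b)
    (hlt : E t < E (t + 1)) : StrictMonoOn E (Set.Icc a (t + 1)) := by
  refine _root_.strictMonoOn_of_lt_succ Set.ordConnected_Icc fun u _ hu hu1 ↦ ?_
  rw [Order.succ_eq_add_one] at hu1 ⊢
  have hut : u ≤ t := by have := hu1.2; omega
  exact Nat.decreasingInduction' (P := fun u ↦ E u < E (u + 1))
    (fun k hkt huk ih ↦ h.lt_succ_of_succ_lt_succ_succ (hu.1.trans huk) (by omega) ih) hut hlt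

theorem unimodal (h : AvgMarginal E m a b) {t : ℕ} (ht : t ∈ Icc a (b + 1))
    (hmax : ∀ u ∈ Icc a (b + 1), E u ≤ E t) :
    (∀ s, a ≤ s → s < t → E s ≤ E (s + 1)) ∧ (∀ s, t ≤ s → s ≤ b → E (s + 1) ≤ E s) := by
  obtain ⟨hat, htb⟩ := mem_Icc.1 ht
  refine ⟨fun s has hst ↦ le_of_not_gt fun hlt ↦ ?_, fun s hts hsb ↦ le_of_not_gt fun hlt ↦ ?_⟩
  · have hanti := h.strictAntiOn_of_succ_lt has hlt
    exact (hanti ⟨le_rfl, by omega⟩ ⟨hst.le, htb⟩ hst).not_ge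
      (hmax s (mem_Icc.2 ⟨has, by omega⟩))
  · have hmono := h.strictMonoOn_of_lt_succ hsb hlt
    exact (hmono ⟨hat, by omega⟩ ⟨by omega, le_rfl⟩ (by omega)).not_ge
      (hmax (s + 1) (mem_Icc.2 ⟨by omega, by omega⟩))

end AvgMarginal

namespace ThresholdPolicy

variable {M s : ℕ} {p G P B r : ℝ} {U : ℕ → ℝ}

noncomputable def tail (M : ℕ) (r : ℝ) (U : ℕ → ℝ) (s : ℕ) : ℝ :=
  ∑ i ∈ range (M - s), U (s + i) * r ^ i

lemma tail_eq_zero_of_le (h : M ≤ s) : tail M r U s = 0 := by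
  simp [tail, Nat.sub_eq_zero_of_le h]

lemma tail_eq_add_mul_tail_succ (h : s < M) : tail M r U s = U s + r * tail M r U (s + 1) := by
  rw [tail, tail, show M - s = M - (s + 1) + 1 by omega, sum_range_succ', mul_sum, add_comm]
  simp only [add_zero, pow_zero, mul_one, pow_succ]
  congr 1
  exact sum_congr rfl fun i _ ↦ by rw [show s + (i + 1) = s + 1 + i by omega]; ring

lemma tail_succ_le (hr : 0 ≤ r) (hU : AntitoneOn U (Set.Icc 1 M))
    (hU0 : ∀ x ∈ Set.Icc 1 M, 0 ≤ U x) (hs : 1 ≤ s) : tail M r U (s + 1) ≤ tail M r U s :=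
  calc tail M r U (s + 1) = ∑ i ∈ range (M - (s + 1)), U (s + 1 + i) * r ^ i := rfl
    _ ≤ ∑ i ∈ range (M - (s + 1)), U (s + i) * r ^ i := by
      refine sum_le_sum fun i hi ↦ mul_le_mul_of_nonneg_right ?_ (pow_nonneg hr i)
      have := mem_range.1 hi
      refine hU ⟨?_, ?_⟩ ⟨?_, ?_⟩ ?_ <;> omega
    _ ≤ tail M r U s := by
      refine sum_le_sum_of_subset_of_nonneg (range_mono (by omega)) fun i hi _ ↦ ?_
      have := mem_range.1 hi
      refine mul_nonneg (hU0 _ ⟨?_, ?_⟩) (pow_nonneg hr i) <;> omega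

noncomputable def rewardNum (M : ℕ) (p G P B : ℝ) (U : ℕ → ℝ) (s : ℕ) : ℝ :=
  (∑ x ∈ Icc 1 (s - 1), U x) + tail M (1 - p) U s - G / p - P + B

lemma rewardNum_succ (hs : 1 ≤ s) (hsM : s < M) :
    rewardNum M p G P B U (s + 1) = rewardNum M p G P B U s + p * tail M (1 - p) U (s + 1) := by
  have hIcc : ∑ x ∈ Icc 1 s, U x = ∑ x ∈ Icc 1 (s - 1), U x + U s := by
    obtain ⟨k, rfl⟩ := Nat.exists_eq_add_of_le' hs
    simp [sum_Icc_succ_top]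
  simp only [rewardNum, Nat.add_sub_cancel, hIcc, tail_eq_add_mul_tail_succ hsM]
  ring

lemma natCast_add_one_sub_div_pos (hp : 0 < p) (hs : 1 ≤ s) : 0 < (s : ℝ) + (1 - p) / p := by
  have hs' : (1 : ℝ) ≤ s := by exact_mod_cast hs
  rw [sub_div, div_self hp.ne']
  linarith [one_div_pos.2 hp]

lemma Ereward_eq_div (h : s ≤ M) :
    Ereward M p G P B U s = rewardNum M p G P B U s / ((s : ℝ) + (1 - p) / p) := by
  rw [Ereward, if_neg (by omega), inv_mul_eq_div, rewardNum, tail]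

lemma Ereward_self_add_one : Ereward M p G P B U (M + 1) = 0 := if_pos rfl

lemma Ereward_succ_eq_div (hs : 1 ≤ s) (hsM : s < M) :
    Ereward M p G P B U (s + 1) = (rewardNum M p G P B U s + p * tail M (1 - p) U (s + 1)) /
      (((s : ℝ) + (1 - p) / p) + 1) := by
  rw [Ereward_eq_div hsM, rewardNum_succ hs hsM]
  push_cast
  ring

lemma sign_Ereward_succ_sub (hp : 0 < p) (hs : 1 ≤ s) (hsM : s ≤ M) :
    sign (Ereward M p G P B U (s + 1) - Ereward M p G P B U s) =
      sign (p * tail M (1 - p) U (s + 1) - Ereward M p G P B U s) := by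
  rcases hsM.lt_or_eq with hsM | rfl
  · rw [Ereward_succ_eq_div hs hsM, Ereward_eq_div hsM.le]
    exact (sign_div_add_one_sub_div (natCast_add_one_sub_div_pos hp hs)).1
  · rw [Ereward_self_add_one, tail_eq_zero_of_le (Nat.le_succ s), mul_zero]

lemma sign_Ereward_succ_sub' (hp : 0 < p) (hs : 1 ≤ s) (hsM : s < M) :
    sign (Ereward M p G P B U (s + 1) - Ereward M p G P B U s) =
      sign (p * tail M (1 - p) U (s + 1) - Ereward M p G P B U (s + 1)) := by
  rw [Ereward_succ_eq_div hs hsM, Ereward_eq_div hsM.le]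
  exact (sign_div_add_one_sub_div (natCast_add_one_sub_div_pos hp hs)).2

theorem avgMarginal_Ereward (hp : 0 < p) (hp1 : p < 1) (hU : AntitoneOn U (Set.Icc 1 M))
    (hUM : U M = 0) :
    AvgMarginal (Ereward M p G P B U) (fun s ↦ p * tail M (1 - p) U (s + 1)) 1 M where
  marginal_succ_le s hs _ := by
    have hU0 : ∀ x ∈ Set.Icc 1 M, 0 ≤ U x := fun x hx ↦
      hUM ▸ hU hx ⟨hx.1.trans hx.2, le_rfl⟩ hx.2
    exact mul_le_mul_of_nonneg_left (tail_succ_le (by linarith) hU hU0 (by omega)) hp.le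
  sign_succ_sub _ hs hsM := sign_Ereward_succ_sub hp hs hsM
  sign_succ_sub' _ hs hsM := sign_Ereward_succ_sub' hp hs hsM

end ThresholdPolicy

open ThresholdPolicy in
theorem reward_unimodal_general (M sstar : ℕ) (p G P B : ℝ) (U : ℕ → ℝ)
    (hp : 0 < p) (hp1 : p < 1)
    (hU : ∀ ⦃x y : ℕ⦄, 1 ≤ x → x ≤ y → y ≤ M → U y ≤ U x)
    (hUM : U M = 0)
    (hmem : sstar ∈ Finset.Icc 1 (M + 1))
    (hmax : ∀ t ∈ Finset.Icc 1 (M + 1),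
      Ereward M p G P B U t ≤ Ereward M p G P B U sstar) :
    (∀ s : ℕ, 1 ≤ s → s ≤ sstar - 1 →
      Ereward M p G P B U s ≤ Ereward M p G P B U (s + 1)) ∧
    (∀ s : ℕ, sstar ≤ s → s ≤ M →
      Ereward M p G P B U (s + 1) ≤ Ereward M p G P B U s) := by
  have hU' : AntitoneOn U (Set.Icc 1 M) := fun x hx y hy hxy ↦ hU hx.1 hxy hy.2
  obtain ⟨hup, hdown⟩ := (avgMarginal_Ereward (G := G) (P := P) (B := B) hp hp1 hU' hUM).unimodal
    hmem hmax
  exact ⟨fun s hs hss ↦ hup s hs (by have := (mem_Icc.1 hmem).1; omega), hdown⟩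

/-- If `s*` maximizes `E` over `{1,...,M+1}`, then `E` is unimodal around `s*`:
nondecreasing up to `s*` and nonincreasing after `s*`. -/
theorem reward_unimodal (M sstar : ℕ) (p G P B : ℝ) (U : ℕ → ℝ)
    (hM : 2 ≤ M) (hp : 0 < p) (hp1 : p < 1)
    (hU : ∀ ⦃x y : ℕ⦄, 1 ≤ x → x ≤ y → y ≤ M → U y ≤ U x)
    (hUM : U M = 0)
    (hmem : sstar ∈ Finset.Icc 1 (M + 1))
    (hmax : ∀ t ∈ Finset.Icc 1 (M + 1),
      Ereward M p G P B U t ≤ Ereward M p G P B U sstar) :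
    (∀ s : ℕ, 1 ≤ s → s ≤ sstar - 1 →
      Ereward M p G P B U s ≤ Ereward M p G P B U (s + 1)) ∧
    (∀ s : ℕ, sstar ≤ s → s ≤ M →
      Ereward M p G P B U (s + 1) ≤ Ereward M p G P B U s) :=
  reward_unimodal_general M sstar p G P B U hp hp1 hU hUM hmem hmax
end

section
/- The always-active threshold s = 1 is optimal, i.e. E(1) ≥ E(s) for all s ∈ {1,...,M+1}, if and only if (1/(1−p)) · ( U(1) − p·Σ_{x=1}^{M−1} U(x)(1−p)^{x−1} ) ≥ G/p + P − B. -/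
open Finset

lemma mul_add_div_add_one_le_iff {w x y : ℝ} (hw : 0 < w + 1) :
    (w * y + x) / (w + 1) ≤ y ↔ x ≤ y := by
  rw [div_le_iff₀ hw]
  constructor <;> intro h <;> linarith

lemma le_mul_add_div_add_one {w x y : ℝ} (hw : 0 ≤ w) (hxy : x ≤ y) :
    x ≤ (w * y + x) / (w + 1) := by
  rw [le_div_iff₀ (by linarith)]
  nlinarith

noncomputable def discountedTail (M : ℕ) (p : ℝ) (U : ℕ → ℝ) (s : ℕ) : ℝ :=
  ∑ i ∈ range (M - s), U (s + i) * (1 - p) ^ i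

namespace discountedTail

variable {M : ℕ} {p : ℝ} {U : ℕ → ℝ} {s : ℕ}

lemma eq_zero_of_le (hs : M ≤ s) : discountedTail M p U s = 0 := by
  simp [discountedTail, Nat.sub_eq_zero_of_le hs]

lemma eq_add_mul_succ (hs : s < M) :
    discountedTail M p U s = U s + (1 - p) * discountedTail M p U (s + 1) := by
  rw [discountedTail, discountedTail, show M - s = M - (s + 1) + 1 by omega,
    sum_range_succ', mul_sum, add_zero, pow_zero, mul_one, add_comm]
  congr 1
  exact sum_congr rfl fun i _ => by rw [← add_assoc, add_right_comm, pow_succ]; ring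

lemma one_eq_sum_Icc (M : ℕ) (p : ℝ) (U : ℕ → ℝ) :
    discountedTail M p U 1 = ∑ x ∈ Icc 1 (M - 1), U x * (1 - p) ^ (x - 1) := by
  rw [← Ico_add_one_right_eq_Icc, sum_Ico_eq_sum_range, Nat.add_sub_cancel]
  exact sum_congr rfl fun i _ => by rw [Nat.add_sub_cancel_left]

lemma succ_le_self (hp1 : p ≤ 1) (hU : ∀ ⦃x y : ℕ⦄, 1 ≤ x → x ≤ y → y ≤ M → U y ≤ U x)
    (hUM : U M = 0) (hs : 1 ≤ s) :
    discountedTail M p U (s + 1) ≤ discountedTail M p U s := by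
  have hq : 0 ≤ 1 - p := by linarith
  calc ∑ i ∈ range (M - (s + 1)), U (s + 1 + i) * (1 - p) ^ i
      ≤ ∑ i ∈ range (M - (s + 1)), U (s + i) * (1 - p) ^ i := by
        refine sum_le_sum fun i hi => ?_
        have hi := mem_range.1 hi
        exact mul_le_mul_of_nonneg_right (hU (by omega) (by omega) (by omega)) (pow_nonneg hq i)
    _ ≤ ∑ i ∈ range (M - s), U (s + i) * (1 - p) ^ i := by
        refine sum_le_sum_of_subset_of_nonneg (range_subset_range.2 (by omega)) fun i hi _ => ?_
        have hi := mem_range.1 hi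
        have hUnonneg : 0 ≤ U (s + i) := hUM ▸ hU (by omega) (by omega) le_rfl
        exact mul_nonneg hUnonneg (pow_nonneg hq i)

end discountedTail

namespace Ereward

variable {M : ℕ} {p G P B : ℝ} {U : ℕ → ℝ} {s : ℕ}

lemma eq_div (hs : s ≤ M) :
    Ereward M p G P B U s =
      ((∑ x ∈ Icc 1 (s - 1), U x) + discountedTail M p U s - (G / p + P - B)) /
        (s + (1 - p) / p) := by
  rw [Ereward, if_neg (by omega), discountedTail, inv_mul_eq_div]
  ring

lemma one_eq (hp : p ≠ 0) (hM : 1 ≤ M) :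
    Ereward M p G P B U 1 = p * (discountedTail M p U 1 - (G / p + P - B)) := by
  rw [eq_div hM, show ((1 : ℕ) : ℝ) + (1 - p) / p = p⁻¹ by field_simp; ring]
  simp [div_eq_mul_inv, mul_comm]

lemma denom_pos (hp : 0 < p) (hs : 1 ≤ s) : 0 < (s : ℝ) + (1 - p) / p := by
  have hs' : (1 : ℝ) ≤ s := by exact_mod_cast hs
  rw [sub_div, div_self hp.ne']
  linarith [one_div_pos.2 hp]

lemma succ (hp : 0 < p) (hs1 : 1 ≤ s) (hsM : s < M) :
    Ereward M p G P B U (s + 1) =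
      ((s + (1 - p) / p) * Ereward M p G P B U s + p * discountedTail M p U (s + 1)) /
        ((s + (1 - p) / p) + 1) := by
  have hsum : ∑ x ∈ Icc 1 s, U x = ∑ x ∈ Icc 1 (s - 1), U x + U s := by
    conv_lhs => rw [← Nat.sub_add_cancel hs1]
    rw [sum_Icc_succ_top (by omega), Nat.sub_add_cancel hs1]
  rw [eq_div hsM.le, eq_div (s := s + 1) hsM, mul_div_cancel₀ _ (denom_pos hp hs1).ne',
    discountedTail.eq_add_mul_succ hsM, Nat.add_sub_cancel, hsum]
  push_cast
  ring_nf

lemma succ_le_iff (hp : 0 < p) (hs1 : 1 ≤ s) (hsM : s < M) :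
    Ereward M p G P B U (s + 1) ≤ Ereward M p G P B U s ↔
      p * discountedTail M p U (s + 1) ≤ Ereward M p G P B U s := by
  rw [succ hp hs1 hsM]
  exact mul_add_div_add_one_le_iff (by linarith [denom_pos hp hs1])

lemma tail_le_succ (hp : 0 < p) (hs1 : 1 ≤ s) (hsM : s < M)
    (h : p * discountedTail M p U (s + 1) ≤ Ereward M p G P B U s) :
    p * discountedTail M p U (s + 1) ≤ Ereward M p G P B U (s + 1) := by
  rw [succ hp hs1 hsM]
  exact le_mul_add_div_add_one (denom_pos hp hs1).le h

lemma tail_le_of_tail_two_le (hp : 0 < p) (hp1 : p ≤ 1)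
    (hU : ∀ ⦃x y : ℕ⦄, 1 ≤ x → x ≤ y → y ≤ M → U y ≤ U x) (hUM : U M = 0)
    (h : p * discountedTail M p U 2 ≤ Ereward M p G P B U 1) (hs1 : 1 ≤ s) (hsM : s ≤ M) :
    p * discountedTail M p U (s + 1) ≤ Ereward M p G P B U s := by
  induction s, hs1 using Nat.le_induction with
  | base => exact h
  | succ s hs1 ih =>
    have hprev := tail_le_succ hp hs1 hsM (ih (by omega))
    calc p * discountedTail M p U (s + 1 + 1)
        ≤ p * discountedTail M p U (s + 1) :=
          mul_le_mul_of_nonneg_left (discountedTail.succ_le_self hp1 hU hUM (by omega)) hp.le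
      _ ≤ Ereward M p G P B U (s + 1) := hprev

lemma le_one_of_tail_two_le (hp : 0 < p) (hp1 : p ≤ 1)
    (hU : ∀ ⦃x y : ℕ⦄, 1 ≤ x → x ≤ y → y ≤ M → U y ≤ U x) (hUM : U M = 0)
    (h : p * discountedTail M p U 2 ≤ Ereward M p G P B U 1) (hs1 : 1 ≤ s) (hsM : s ≤ M) :
    Ereward M p G P B U s ≤ Ereward M p G P B U 1 := by
  induction s, hs1 using Nat.le_induction with
  | base => exact le_rfl
  | succ s hs1 ih =>
    have hstep := (succ_le_iff hp hs1 hsM).2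
      (tail_le_of_tail_two_le hp hp1 hU hUM h hs1 (by omega))
    exact hstep.trans (ih (by omega))

lemma tail_two_le_one_iff (hM : 2 ≤ M) (hp : 0 < p) (hp1 : p < 1) :
    p * discountedTail M p U 2 ≤ Ereward M p G P B U 1 ↔
      1 / (1 - p) * (U 1 - p * ∑ x ∈ Icc 1 (M - 1), U x * (1 - p) ^ (x - 1)) ≥
        G / p + P - B := by
  have hT1 := discountedTail.eq_add_mul_succ (p := p) (U := U) (show 1 < M by omega)
  have hlhs : 1 / (1 - p) * (U 1 - p * discountedTail M p U 1) =
      U 1 - p * discountedTail M p U 2 := by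
    rw [hT1]
    field_simp [(sub_pos.2 hp1).ne']
    ring
  rw [← discountedTail.one_eq_sum_Icc, hlhs, one_eq hp.ne' (by omega),
    mul_le_mul_iff_right₀ hp, hT1]
  constructor <;> intro h <;> linarith

end Ereward

/-- The always-active threshold `s = 1` is optimal iff
`(1/(1−p))·(U(1) − p Σ_{x=1}^{M−1} U(x)(1−p)^{x−1}) ≥ G/p + P − B`. -/
theorem always_active_optimal_iff (M : ℕ) (p G P B : ℝ) (U : ℕ → ℝ)
    (hM : 2 ≤ M) (hp : 0 < p) (hp1 : p < 1)
    (hU : ∀ ⦃x y : ℕ⦄, 1 ≤ x → x ≤ y → y ≤ M → U y ≤ U x)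
    (hUM : U M = 0) :
    (∀ s ∈ Finset.Icc 1 (M + 1),
        Ereward M p G P B U s ≤ Ereward M p G P B U 1) ↔
    (1 / (1 - p)) *
        (U 1 - p * ∑ x ∈ Finset.Icc 1 (M - 1), U x * (1 - p) ^ (x - 1))
      ≥ G / p + P - B := by
  rw [← Ereward.tail_two_le_one_iff hM hp hp1]
  constructor
  · intro h
    exact (Ereward.succ_le_iff hp le_rfl (by omega)).1 (h 2 (mem_Icc.2 ⟨by omega, by omega⟩))
  · intro h s hs
    obtain ⟨hs1, hsM⟩ := mem_Icc.1 hs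
    rcases hsM.lt_or_eq with hsM | rfl
    · exact Ereward.le_one_of_tail_two_le hp hp1.le hU hUM h hs1 (by omega)
    · have hM0 : 0 ≤ Ereward M p G P B U M := by
        simpa [discountedTail.eq_zero_of_le] using
          Ereward.tail_le_of_tail_two_le hp hp1.le hU hUM h (by omega) le_rfl
      rw [Ereward, if_pos rfl]
      exact hM0.trans (Ereward.le_one_of_tail_two_le hp hp1.le hU hUM h (by omega) le_rfl)
end

section
/- The always-inactive policy is optimal, i.e. E(s) ≤ 0 = E(M+1) for every s ∈ {1,...,M}, if and only if Σ_{j=1}^{M−1} U(j) ≤ G/p + P − B. -/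
/-!
The denominator `s + (1 - p)/p` of `E(s)` is positive, so `E(s) ≤ 0` says that the utility
collected under the threshold-`s` policy is at most `G/p + P - B`. Since `U` is nonincreasing
with `U(M) = 0`, it is nonnegative on `{1, …, M}`, so discounting the tail `U(s), …, U(M-1)`
by `(1 - p)^i ≤ 1` only lowers it: this utility is largest at `s = M`, where it equals
`Σ_{j=1}^{M-1} U(j)`.
-/

open Finset

noncomputable def thresholdUtility (M : ℕ) (p : ℝ) (U : ℕ → ℝ) (s : ℕ) : ℝ :=
  (∑ x ∈ Icc 1 (s - 1), U x) + ∑ i ∈ range (M - s), U (s + i) * (1 - p) ^ i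

lemma Nat.Icc_sub_one_right_eq_Ico {a : ℕ} (ha : 1 ≤ a) (n : ℕ) : Icc a (n - 1) = Ico a n := by
  rcases n with _ | n
  · simp [Icc_eq_empty_of_lt (Nat.lt_of_succ_le ha)]
  · exact (Ico_add_one_right_eq_Icc a n).symm

section

variable {M s : ℕ} {p G P B : ℝ} {U : ℕ → ℝ}

lemma Ereward_of_ne (hs : s ≠ M + 1) :
    Ereward M p G P B U s = (s + (1 - p) / p)⁻¹ * (thresholdUtility M p U s - (G / p + P - B)) := by
  rw [Ereward, if_neg hs, thresholdUtility]
  ring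

lemma Ereward_nonpos_iff (hs : s ≠ M + 1) (hp : 0 < p) (hp1 : p < 1) :
    Ereward M p G P B U s ≤ 0 ↔ thresholdUtility M p U s ≤ G / p + P - B := by
  have hden : 0 < ((s : ℝ) + (1 - p) / p)⁻¹ := by
    have : 0 < (1 - p) / p := div_pos (by linarith) hp
    positivity
  rw [Ereward_of_ne hs, ← mul_zero (_ : ℝ)⁻¹, mul_le_mul_iff_of_pos_left hden, sub_nonpos]

lemma thresholdUtility_self (M : ℕ) (p : ℝ) (U : ℕ → ℝ) :
    thresholdUtility M p U M = ∑ j ∈ Icc 1 (M - 1), U j := by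
  simp [thresholdUtility]

lemma thresholdUtility_le_self (hp : 0 ≤ p) (hp1 : p ≤ 1) (hs : 1 ≤ s) (hsM : s ≤ M)
    (hU : ∀ x, s ≤ x → x < M → 0 ≤ U x) :
    thresholdUtility M p U s ≤ thresholdUtility M p U M := by
  calc thresholdUtility M p U s
      ≤ (∑ x ∈ Ico 1 s, U x) + ∑ i ∈ range (M - s), U (s + i) := by
        rw [thresholdUtility, Nat.Icc_sub_one_right_eq_Ico le_rfl]
        gcongr with i hi
        exact mul_le_of_le_one_right (hU _ (by omega) (by grind))
          (pow_le_one₀ (by linarith) (by linarith))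
    _ = ∑ x ∈ Ico 1 M, U x := by
        rw [← sum_Ico_consecutive _ hs hsM, sum_Ico_eq_sum_range U s M]
    _ = thresholdUtility M p U M := by
        rw [thresholdUtility_self, Nat.Icc_sub_one_right_eq_Ico le_rfl]

end

/-- The always-inactive policy is optimal, i.e. `E(s) ≤ 0 = E(M+1)` for all
`s ∈ {1,...,M}`, iff `Σ_{j=1}^{M−1} U(j) ≤ G/p + P − B`. -/
theorem always_inactive_optimal_iff (M : ℕ) (p G P B : ℝ) (U : ℕ → ℝ)
    (hM : 2 ≤ M) (hp : 0 < p) (hp1 : p < 1)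
    (hU : ∀ ⦃x y : ℕ⦄, 1 ≤ x → x ≤ y → y ≤ M → U y ≤ U x)
    (hUM : U M = 0) :
    (∀ s ∈ Finset.Icc 1 M, Ereward M p G P B U s ≤ 0) ↔
    (∑ j ∈ Finset.Icc 1 (M - 1), U j) ≤ G / p + P - B := by
  rw [← thresholdUtility_self M p U]
  constructor
  · intro h
    exact (Ereward_nonpos_iff (by omega) hp hp1).mp (h M (mem_Icc.mpr ⟨by omega, le_rfl⟩))
  · intro hsum s hs
    obtain ⟨hs1, hsM⟩ := mem_Icc.mp hs
    have hU_nonneg (x : ℕ) (hsx : s ≤ x) (hxM : x < M) : 0 ≤ U x :=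
      hUM ▸ hU (by omega) hxM.le le_rfl
    rw [Ereward_nonpos_iff (by omega) hp hp1]
    exact (thresholdUtility_le_self hp.le hp1.le hs1 hsM hU_nonneg).trans hsum
end

section
/- Write E_{G,P,B}(s) to make the dependence of the expected average reward on the cost parameters explicit. Let (G,P,B) and (G',P',B') be two parameter triples with G ≤ G', P ≤ P' and B ≥ B'. If s is the unique maximizer of E_{G,P,B} over {1,...,M+1} and s' is the unique maximizer of E_{G',P',B'} over {1,...,M+1}, then s ≤ s'. In other words, the optimal threshold is nondecreasing with respect to G and P and nonincreasing with respect to B. -/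
/-!
Write `K = G/p + P - B`, so that `E(t) = (t + (1-p)/p)⁻¹ (A(t) - K)` for `t ≤ M` and `E(M+1) = 0`.
Raising `G`, `P` or lowering `B` raises `K`, which changes `E(t)` by `-w(t) ΔK` with
`w(t) = (t + (1-p)/p)⁻¹` (and `w(M+1) = 0`) antitone in `t`. So `E_{G',P',B'} - E_{G,P,B}` is
nondecreasing in `t`: the two rewards have increasing differences, and a Topkis-style exchange
argument shows that unique maximizers move up.
-/

open Finset

theorem le_of_monotoneOn_sub_of_unique_max {α β : Type*} [LinearOrder α] [AddCommGroup β]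
    [LinearOrder β] [IsOrderedAddMonoid β] {f g : α → β} {S : Set α} {s s' : α}
    (hdiff : MonotoneOn (g - f) S) (hs : s ∈ S) (hs' : s' ∈ S)
    (hmax : ∀ t ∈ S, t ≠ s → f t < f s) (hmax' : ∀ t ∈ S, t ≠ s' → g t < g s') :
    s ≤ s' := by
  by_contra! hlt
  have hexchange : g s' + f s ≤ g s + f s' := sub_le_sub_iff.mp (hdiff hs' hs hlt.le)
  have hstrict : g s + f s' < g s' + f s :=
    add_lt_add (hmax' s hs hlt.ne') (hmax s' hs' hlt.ne)
  exact (hexchange.trans_lt hstrict).false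

/-- The coefficient with which the cost `G/p + P - B` enters `E(t)`. -/
noncomputable def costWeight (M : ℕ) (p : ℝ) (t : ℕ) : ℝ :=
  if t = M + 1 then 0 else ((t : ℝ) + (1 - p) / p)⁻¹

theorem Ereward_sub_Ereward (M : ℕ) (p G P B G' P' B' : ℝ) (U : ℕ → ℝ) (t : ℕ) :
    Ereward M p G' P' B' U t - Ereward M p G P B U t =
      costWeight M p t * ((G / p + P - B) - (G' / p + P' - B')) := by
  unfold Ereward costWeight
  split_ifs <;> ring

theorem expected_cycle_length_pos {p : ℝ} (hp : 0 < p) {t : ℕ} (ht : 1 ≤ t) :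
    0 < (t : ℝ) + (1 - p) / p := by
  have hsplit : (t : ℝ) + (1 - p) / p = (t - 1 : ℝ) + 1 / p := by field_simp; ring
  have ht' : (1 : ℝ) ≤ t := by exact_mod_cast ht
  have hinv : 0 < 1 / p := one_div_pos.mpr hp
  rw [hsplit]
  linarith

theorem costWeight_antitoneOn {M : ℕ} {p : ℝ} (hp : 0 < p) :
    AntitoneOn (costWeight M p) (Finset.Icc 1 (M + 1) : Set ℕ) := by
  intro a ha b hb hab
  simp only [coe_Icc, Set.mem_Icc] at ha hb
  have hca := expected_cycle_length_pos hp ha.1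
  unfold costWeight
  by_cases hbM : b = M + 1
  · rw [if_pos hbM]
    split_ifs
    exacts [le_rfl, (inv_pos.mpr hca).le]
  · rw [if_neg hbM, if_neg (by omega)]
    exact inv_anti₀ hca (by gcongr)

theorem optimal_threshold_monotone_general (M s s' : ℕ) (p G P B G' P' B' : ℝ) (U : ℕ → ℝ)
    (hp : 0 < p)
    (hG : G ≤ G') (hP : P ≤ P') (hB : B' ≤ B)
    (hmem : s ∈ Finset.Icc 1 (M + 1))
    (hmax : ∀ t ∈ Finset.Icc 1 (M + 1), t ≠ s →
      Ereward M p G P B U t < Ereward M p G P B U s)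
    (hmem' : s' ∈ Finset.Icc 1 (M + 1))
    (hmax' : ∀ t ∈ Finset.Icc 1 (M + 1), t ≠ s' →
      Ereward M p G' P' B' U t < Ereward M p G' P' B' U s') :
    s ≤ s' := by
  have hcost : (G / p + P - B) - (G' / p + P' - B') ≤ 0 := by
    have := div_le_div_of_nonneg_right hG hp.le
    linarith
  refine le_of_monotoneOn_sub_of_unique_max (S := (Finset.Icc 1 (M + 1) : Set ℕ))
    (fun a ha b hb hab => ?_) hmem hmem' hmax hmax'
  rw [Pi.sub_apply, Pi.sub_apply, Ereward_sub_Ereward, Ereward_sub_Ereward]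
  exact mul_le_mul_of_nonpos_right (costWeight_antitoneOn hp ha hb hab) hcost

/-- Monotonicity of the optimal threshold in the cost parameters: if `G ≤ G'`,
`P ≤ P'` and `B ≥ B'`, and `s`, `s'` are the unique maximizers of `E_{G,P,B}` and
`E_{G',P',B'}` over `{1,...,M+1}` respectively, then `s ≤ s'`. -/
theorem optimal_threshold_monotone (M s s' : ℕ) (p G P B G' P' B' : ℝ) (U : ℕ → ℝ)
    (hM : 2 ≤ M) (hp : 0 < p) (hp1 : p < 1)
    (hU : ∀ ⦃x y : ℕ⦄, 1 ≤ x → x ≤ y → y ≤ M → U y ≤ U x)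
    (hUM : U M = 0)
    (hG : G ≤ G') (hP : P ≤ P') (hB : B' ≤ B)
    (hmem : s ∈ Finset.Icc 1 (M + 1))
    (hmax : ∀ t ∈ Finset.Icc 1 (M + 1), t ≠ s →
      Ereward M p G P B U t < Ereward M p G P B U s)
    (hmem' : s' ∈ Finset.Icc 1 (M + 1))
    (hmax' : ∀ t ∈ Finset.Icc 1 (M + 1), t ≠ s' →
      Ereward M p G' P' B' U t < Ereward M p G' P' B' U s') :
    s ≤ s' :=
  optimal_threshold_monotone_general M s s' p G P B G' P' B' U hp hG hP hB hmem hmax hmem' hmax'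
end

section
/- Suppose the set of optimal thresholds Argmax(E) = { s ∈ {1,...,M+1} : E(s) ≥ E(t) for all t ∈ {1,...,M+1} } contains at least three elements. Then there exists m ∈ {1,...,M} such that U(x) = 0 for every x with m ≤ x ≤ M, such that Σ_{x=1}^{m−1} U(x) = G/p + P − B, and moreover the maximum value of E over {1,...,M+1} equals 0 (so the always-inactive policy is optimal). Consequently, if no such m exists, the number of optimal thresholds is at most two. -/
/-
Write `w(s) = s + (1-p)/p` and `T(s) = Σ_{i < M-s} U(s+i)(1-p)^i`. Then `W(s) = w(s)E(s)`
satisfies `W(s+1) - W(s) = p T(s+1)`, and `T` is nonincreasing. Hence, for the optimal value `V`,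
`F(s) = w(s)(E(s) - V) ≤ 0` is concave in `s` and vanishes exactly at the optimal thresholds.
Between two optimal thresholds `s + 2 ≤ u ≤ M` it is constant, which forces `T(u-1) = T(u)`;
a geometric-series bound, strict because `p < 1`, then gives `T(u) = 0` and so `V = 0`.
With `V = 0`, the smallest optimal threshold `s` has `p T(s+1) ≤ 0`, so `U` vanishes on
`[s+1, M]`, and `W(s+1) = 0` is the identity `Σ_{x ≤ s} U(x) = G/p + P - B`.
-/

open Finset

theorem Set.exists_lt_lt_of_three_le_ncard {α : Type*} [LinearOrder α] {S : Set α}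
    (h : 3 ≤ S.ncard) : ∃ a ∈ S, ∃ b ∈ S, ∃ c ∈ S, a < b ∧ b < c := by
  obtain ⟨T, hTS, hT⟩ := Set.exists_subset_card_eq h
  have hfin : T.Finite := Set.finite_of_ncard_pos (by omega)
  let f := hfin.toFinset.orderEmbOfFin (k := 3) (by rw [← Set.ncard_eq_toFinset_card T hfin, hT])
  have hf (i : Fin 3) : f i ∈ S := hTS (by simpa using hfin.toFinset.orderEmbOfFin_mem _ i)
  exact ⟨f 0, hf 0, f 1, hf 1, f 2, hf 2, by simp, by simp⟩

theorem increment_eq_zero_of_nonpos_of_eq {F d : ℕ → ℝ} {a b : ℕ}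
    (hF : ∀ r ∈ Ico a b, F (r + 1) = F r + d r) (hd : ∀ r ∈ Ico a b, d r ≤ 0)
    (hab : F a = F b) : ∀ r ∈ Ico a b, d r = 0 := by
  have hsum : ∑ r ∈ Ico a b, d r = 0 := by
    rcases le_or_gt a b with h | h
    · rw [sum_congr rfl fun r hr => eq_sub_of_add_eq' (hF r hr).symm, sum_Ico_sub _ h, hab,
        sub_self]
    · simp [h.le]
  exact (sum_eq_zero_iff_of_nonpos hd).mp hsum

namespace ThresholdPolicy

variable {M : ℕ} {p G P B : ℝ} {U : ℕ → ℝ}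

noncomputable def tailSum (M : ℕ) (p : ℝ) (U : ℕ → ℝ) (s : ℕ) : ℝ :=
  ∑ i ∈ range (M - s), U (s + i) * (1 - p) ^ i

lemma tailSum_of_le {s : ℕ} (h : M ≤ s) : tailSum M p U s = 0 := by
  simp [tailSum, Nat.sub_eq_zero_of_le h]

lemma tailSum_eq_add {s : ℕ} (h : s < M) :
    tailSum M p U s = U s + (1 - p) * tailSum M p U (s + 1) := by
  rw [tailSum, tailSum, show M - s = M - (s + 1) + 1 by omega, sum_range_succ', mul_sum]
  simp only [add_zero, pow_zero, mul_one, add_comm (U s)]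
  congr 1
  refine sum_congr rfl fun i _ => ?_
  rw [← add_assoc, add_right_comm, pow_succ]; ring

lemma tailSum_nonneg (hp1 : p ≤ 1) {s : ℕ} (hU0 : ∀ x ∈ Set.Ico s M, 0 ≤ U x) :
    0 ≤ tailSum M p U s :=
  sum_nonneg fun i hi =>
    mul_nonneg (hU0 _ ⟨by omega, by simp at hi; omega⟩) (pow_nonneg (by linarith) i)

lemma mul_tailSum_le (hp : 0 ≤ p) (hp1 : p ≤ 1) {s : ℕ} {b : ℝ}
    (hb : ∀ x ∈ Set.Ico s M, U x ≤ b) :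
    p * tailSum M p U s ≤ b * (1 - (1 - p) ^ (M - s)) := by
  have hgeom : p * ∑ i ∈ range (M - s), (1 - p) ^ i = 1 - (1 - p) ^ (M - s) := by
    linear_combination -geom_sum_mul (1 - p) (M - s)
  calc p * tailSum M p U s ≤ p * ∑ i ∈ range (M - s), b * (1 - p) ^ i := by
        unfold tailSum
        gcongr with i hi
        exact hb _ ⟨by omega, by simp at hi; omega⟩
    _ = b * (1 - (1 - p) ^ (M - s)) := by rw [← mul_sum, mul_left_comm, hgeom]

lemma tailSum_succ_le (hp : 0 ≤ p) (hp1 : p ≤ 1) {s : ℕ} (hU : AntitoneOn U (Set.Icc s M))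
    (hUM : 0 ≤ U M) : tailSum M p U (s + 1) ≤ tailSum M p U s := by
  rcases lt_or_ge s M with h | h
  · have := mul_tailSum_le hp hp1 (M := M) (s := s + 1) (U := U)
      (fun x hx => hU ⟨le_rfl, h.le⟩ ⟨by linarith [hx.1], hx.2.le⟩ (by linarith [hx.1]))
    have hUs : 0 ≤ U s := hUM.trans (hU ⟨le_rfl, h.le⟩ ⟨h.le, le_rfl⟩ h.le)
    rw [tailSum_eq_add h]
    nlinarith [pow_nonneg (by linarith : 0 ≤ 1 - p) (M - (s + 1))]
  · rw [tailSum_of_le h, tailSum_of_le (by omega)]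

lemma tailSum_antitoneOn (hp : 0 ≤ p) (hp1 : p ≤ 1) {a : ℕ} (hU : AntitoneOn U (Set.Icc a M))
    (hUM : 0 ≤ U M) : AntitoneOn (tailSum M p U) (Set.Ici a) :=
  antitoneOn_nat_Ici_of_succ_le fun _ hs =>
    tailSum_succ_le hp hp1 (hU.mono (Set.Icc_subset_Icc_left hs)) hUM

lemma eq_zero_of_tailSum_eq_zero (hp1 : p < 1) {s : ℕ} (hU0 : ∀ x ∈ Set.Ico s M, 0 ≤ U x)
    (h : tailSum M p U s = 0) : ∀ x ∈ Set.Ico s M, U x = 0 := by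
  rintro x ⟨hsx, hxM⟩
  have hterms := (sum_eq_zero_iff_of_nonneg fun i hi =>
    mul_nonneg (hU0 (s + i) ⟨by omega, by simp at hi; omega⟩) (pow_nonneg (by linarith) i)).mp h
  have hx' := hterms (x - s) (by simp; omega)
  rw [Nat.add_sub_cancel' hsx] at hx'
  exact (mul_eq_zero.mp hx').resolve_right (pow_ne_zero _ (by linarith))

lemma tailSum_succ_eq_zero_of_eq (hp : 0 < p) (hp1 : p < 1) {s : ℕ}
    (hU : AntitoneOn U (Set.Icc s M)) (hUM : 0 ≤ U M)
    (h : tailSum M p U (s + 1) = tailSum M p U s) : tailSum M p U (s + 1) = 0 := by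
  rcases le_or_gt M s with hsM | hsM
  · exact tailSum_of_le (by omega)
  have hbound := mul_tailSum_le hp.le hp1.le (M := M) (s := s + 1) (U := U)
    (fun x hx => hU ⟨le_rfl, hsM.le⟩ ⟨by linarith [hx.1], hx.2.le⟩ (by linarith [hx.1]))
  have hrec := tailSum_eq_add (p := p) (U := U) hsM
  have hpow : 0 < (1 - p) ^ (M - (s + 1)) := pow_pos (by linarith) _
  have hnonneg := tailSum_nonneg hp1.le (M := M) (U := U) (s := s + 1)
    fun x hx => hUM.trans (hU ⟨by linarith [hx.1], hx.2.le⟩ ⟨hsM.le, le_rfl⟩ hx.2.le)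
  -- the recursion gives `p * tailSum (s+1) = U s`, the geometric bound `≤ U s * (1 - (1-p)^n)`
  have hUs : U s ≤ 0 := by nlinarith
  nlinarith

noncomputable def weight (p : ℝ) (s : ℕ) : ℝ := s + (1 - p) / p

lemma weight_succ (p : ℝ) (s : ℕ) : weight p (s + 1) = weight p s + 1 := by
  simp only [weight]; push_cast; ring

lemma weight_pos (hp : 0 < p) (hp1 : p ≤ 1) {s : ℕ} (hs : 1 ≤ s) : 0 < weight p s := by
  rw [weight]
  have : (1 : ℝ) ≤ s := by exact_mod_cast hs
  have : 0 ≤ (1 - p) / p := div_nonneg (by linarith) hp.le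
  linarith

lemma weight_mul_Ereward (hp : 0 < p) (hp1 : p ≤ 1) {s : ℕ} (hs : 1 ≤ s) (hsM : s ≤ M) :
    weight p s * Ereward M p G P B U s
      = ∑ x ∈ Icc 1 (s - 1), U x + tailSum M p U s - G / p - P + B := by
  rw [Ereward, ← weight, if_neg (by omega), ← mul_assoc,
    mul_inv_cancel₀ (weight_pos hp hp1 hs).ne', one_mul, tailSum]

lemma weight_mul_Ereward_succ (hp : 0 < p) (hp1 : p ≤ 1) {s : ℕ} (hs : 1 ≤ s) (hsM : s < M) :
    weight p (s + 1) * Ereward M p G P B U (s + 1)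
      = weight p s * Ereward M p G P B U s + p * tailSum M p U (s + 1) := by
  have hsucc := weight_mul_Ereward (G := G) (P := P) (B := B) (U := U) (s := s + 1) hp hp1
    (by omega) hsM
  have h := weight_mul_Ereward (G := G) (P := P) (B := B) (U := U) hp hp1 hs hsM.le
  have hA : ∑ x ∈ Icc 1 s, U x = ∑ x ∈ Icc 1 (s - 1), U x + U s := by
    obtain ⟨k, rfl⟩ := Nat.exists_eq_add_of_le' hs
    rw [Nat.add_sub_cancel, sum_Icc_succ_top (by omega)]
  rw [Nat.add_sub_cancel, hA] at hsucc
  rw [tailSum_eq_add hsM] at h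
  rw [weight_succ] at hsucc ⊢
  linear_combination hsucc - h

variable (M p G P B U) in
def IsOptimal (s : ℕ) : Prop :=
  s ∈ Set.Icc 1 (M + 1) ∧
    ∀ t ∈ Set.Icc 1 (M + 1), Ereward M p G P B U t ≤ Ereward M p G P B U s

namespace IsOptimal

variable {s : ℕ}

lemma mul_tailSum_succ_le (hp : 0 < p) (hp1 : p ≤ 1) (hs : IsOptimal M p G P B U s)
    (hsM : s < M) : p * tailSum M p U (s + 1) ≤ Ereward M p G P B U s := by
  have hstep := weight_mul_Ereward_succ (G := G) (P := P) (B := B) (U := U) hp hp1 hs.1.1 hsM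
  have hle := mul_le_mul_of_nonneg_left (hs.2 (s + 1) ⟨by omega, by omega⟩)
    (weight_pos hp hp1 (Nat.le_add_left 1 s)).le
  rw [weight_succ] at hle hstep
  linarith

lemma eq_zero_of_add_two_le (hp : 0 < p) (hp1 : p < 1) (hU : AntitoneOn U (Set.Icc 1 M)) (hUM : 0 ≤ U M)
    {u : ℕ} (hs : IsOptimal M p G P B U s) (hu : IsOptimal M p G P B U u) (hsu : s + 2 ≤ u) :
    Ereward M p G P B U s = 0 := by
  set V := Ereward M p G P B U s
  have hV : Ereward M p G P B U u = V := le_antisymm (hs.2 u hu.1) (hu.2 s hs.1)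
  rcases hu.1.2.eq_or_lt with rfl | huM
  · simpa [Ereward] using hV.symm
  obtain ⟨k, rfl⟩ : ∃ k, u = k + 2 := ⟨u - 2, by omega⟩
  set F : ℕ → ℝ := fun r => weight p r * (Ereward M p G P B U r - V)
  set d : ℕ → ℝ := fun r => p * tailSum M p U (r + 1) - V
  have hd : ∀ r ∈ Ico s (k + 2), d r = 0 := by
    refine increment_eq_zero_of_nonpos_of_eq (F := F) (fun r hr => ?_) (fun r hr => ?_)
      (by simp only [F, hV, V, sub_self, mul_zero])
    · have := weight_mul_Ereward_succ (G := G) (P := P) (B := B) (M := M) (U := U) (s := r)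
        hp hp1.le (hs.1.1.trans (mem_Ico.mp hr).1) (by simp at hr; omega)
      simp only [F, d, weight_succ] at this ⊢
      linear_combination this
    · have hds := hs.mul_tailSum_succ_le hp hp1.le (by omega)
      have := tailSum_antitoneOn hp.le hp1.le hU hUM (Set.mem_Ici.mpr (by omega : 1 ≤ s + 1))
        (Set.mem_Ici.mpr (by omega : 1 ≤ r + 1)) (by simp at hr; omega : s + 1 ≤ r + 1)
      simp only [d]
      nlinarith
  have hpred : p * tailSum M p U (k + 1) = V := sub_eq_zero.mp (hd k (by simp; omega))
  have hlast : p * tailSum M p U (k + 2) = V := sub_eq_zero.mp (hd (k + 1) (by simp; omega))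
  have hzero := tailSum_succ_eq_zero_of_eq hp hp1 (s := k + 1)
    (hU.mono (Set.Icc_subset_Icc_left (by omega))) hUM
    (mul_left_cancel₀ hp.ne' (hlast.trans hpred.symm))
  rw [← hlast, hzero, mul_zero]

lemma tailSum_succ_eq_zero (hp : 0 < p) (hp1 : p ≤ 1) (hs : IsOptimal M p G P B U s)
    (hsM : s < M) (hE : Ereward M p G P B U s = 0) (hU0 : ∀ x ∈ Set.Ico (s + 1) M, 0 ≤ U x) :
    tailSum M p U (s + 1) = 0 :=
  le_antisymm (nonpos_of_mul_nonpos_right (hE ▸ hs.mul_tailSum_succ_le hp hp1 hsM) hp)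
    (tailSum_nonneg hp1 hU0)

end IsOptimal

lemma sum_Icc_eq_of_Ereward_eq_zero (hp : 0 < p) (hp1 : p ≤ 1) {s : ℕ} (hs : 1 ≤ s)
    (hsM : s < M) (hE : Ereward M p G P B U s = 0) (hT : tailSum M p U (s + 1) = 0) :
    ∑ x ∈ Icc 1 s, U x = G / p + P - B := by
  have hstep := weight_mul_Ereward_succ (G := G) (P := P) (B := B) (U := U) hp hp1 hs hsM
  have hval := weight_mul_Ereward (G := G) (P := P) (B := B) (U := U) hp hp1
    (Nat.le_add_left 1 s) hsM
  rw [hE, hT] at hstep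
  rw [Nat.add_sub_cancel, hT] at hval
  linarith

end ThresholdPolicy

open ThresholdPolicy in
theorem three_optimal_thresholds_general (M : ℕ) (p G P B : ℝ) (U : ℕ → ℝ)
    (hp : 0 < p) (hp1 : p < 1)
    (hU : ∀ ⦃x y : ℕ⦄, 1 ≤ x → x ≤ y → y ≤ M → U y ≤ U x)
    (hUM : U M = 0)
    (hcard : 3 ≤ {s : ℕ | s ∈ Set.Icc 1 (M + 1) ∧
      ∀ t ∈ Set.Icc 1 (M + 1),
        Ereward M p G P B U t ≤ Ereward M p G P B U s}.ncard) :
    ∃ m : ℕ, 1 ≤ m ∧ m ≤ M ∧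
      (∀ x : ℕ, m ≤ x → x ≤ M → U x = 0) ∧
      (∑ x ∈ Finset.Icc 1 (m - 1), U x) = G / p + P - B ∧
      (∀ t ∈ Set.Icc 1 (M + 1), Ereward M p G P B U t ≤ 0) := by
  have hUanti : AntitoneOn U (Set.Icc 1 M) := fun x hx y hy hxy => hU hx.1 hxy hy.2
  have hU0 : ∀ x ∈ Set.Icc 1 M, 0 ≤ U x := fun x hx => hUM ▸ hU hx.1 hx.2 le_rfl
  obtain ⟨s, hs, t, -, u, hu, hst, htu⟩ := Set.exists_lt_lt_of_three_le_ncard hcard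
  have hsM : s < M := by have := hu.1.2; omega
  have hE : Ereward M p G P B U s = 0 :=
    IsOptimal.eq_zero_of_add_two_le hp hp1 hUanti hUM.ge hs hu (by omega)
  have hT := IsOptimal.tailSum_succ_eq_zero hp hp1.le hs hsM hE
    fun x hx => hU0 x ⟨by linarith [hx.1], hx.2.le⟩
  refine ⟨s + 1, by omega, hsM, fun x hx hxM => ?_,
    sum_Icc_eq_of_Ereward_eq_zero hp hp1.le hs.1.1 hsM hE hT, fun t ht => hE ▸ hs.2 t ht⟩
  rcases hxM.eq_or_lt with rfl | hxM
  · exact hUM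
  · exact eq_zero_of_tailSum_eq_zero hp1 (fun y hy => hU0 y ⟨by linarith [hy.1], hy.2.le⟩) hT
      x ⟨hx, hxM⟩

/-- If there are at least three optimal thresholds, then there is an `m ∈ {1,...,M}`
with `U(x) = 0` for all `m ≤ x ≤ M`, `Σ_{x=1}^{m−1} U(x) = G/p + P − B`, and the
optimal reward is `0` (so the always-inactive policy is optimal). -/
theorem three_optimal_thresholds (M : ℕ) (p G P B : ℝ) (U : ℕ → ℝ)
    (hM : 2 ≤ M) (hp : 0 < p) (hp1 : p < 1)
    (hU : ∀ ⦃x y : ℕ⦄, 1 ≤ x → x ≤ y → y ≤ M → U y ≤ U x)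
    (hUM : U M = 0)
    (hcard : 3 ≤ {s : ℕ | s ∈ Set.Icc 1 (M + 1) ∧
      ∀ t ∈ Set.Icc 1 (M + 1),
        Ereward M p G P B U t ≤ Ereward M p G P B U s}.ncard) :
    ∃ m : ℕ, 1 ≤ m ∧ m ≤ M ∧
      (∀ x : ℕ, m ≤ x → x ≤ M → U x = 0) ∧
      (∑ x ∈ Finset.Icc 1 (m - 1), U x) = G / p + P - B ∧
      (∀ t ∈ Set.Icc 1 (M + 1), Ereward M p G P B U t ≤ 0) :=
  three_optimal_thresholds_general M p G P B U hp hp1 hU hUM hcard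
end

section
/- For every integer s with 1 ≤ s ≤ M−1, the expected age of the threshold-s policy admits the closed form A(s) = ( p²s² − p²s − 2(1−p)^{M−s}(1−p) + 2sp + 2 − 2p ) / ( 2p(sp + 1 − p) ). -/
open Finset

/-- Expected age of the threshold-`s` aging-control policy: the mean of the
stationary age distribution of the threshold-`s` chain. -/
noncomputable def Aage (M : ℕ) (p : ℝ) (s : ℕ) : ℝ :=
  ((s : ℝ) + (1 - p) / p)⁻¹ *
    ((∑ i ∈ Finset.Icc 1 s, (i : ℝ))
      + (∑ i ∈ Finset.Icc (s + 1) (M - 1), (i : ℝ) * (1 - p) ^ (i - s))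
      + (M : ℝ) * (1 - p) ^ (M - s) / p)

/-! Write `M = s + m + 1` and `q = 1 - p`. The bracket in `A(s)` is the Gauss sum `1 + ⋯ + s`,
the arithmetico-geometric tail `q ∑_{k<m} (s + 1 + k) q^k`, and a boundary term. Multiplying the
tail by `(1 - q)` telescopes it to a geometric sum, so `(1 - q)²` times it has a closed form;
after clearing the denominator `p (s p + 1 - p)` of `π₁(s)` the claim is a polynomial identity. -/

theorem sum_Icc_one_natCast_mul_two {R : Type*} [CommRing R] (n : ℕ) :
    (∑ i ∈ Icc 1 n, (i : R)) * 2 = n * (n + 1) := by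
  induction n with
  | zero => simp
  | succ n ih =>
    rw [sum_Icc_succ_top (by omega)]
    push_cast
    linear_combination ih

theorem one_sub_sq_mul_sum_range_add_mul_pow {R : Type*} [CommRing R] (a q : R) (m : ℕ) :
    (1 - q) ^ 2 * ∑ k ∈ range m, (a + k) * q ^ k + (1 - q) * (a + m) * q ^ m =
      (1 - q) * a + q * (1 - q ^ m) := by
  induction m with
  | zero => simp
  | succ m ih =>
    rw [sum_range_succ]
    push_cast
    linear_combination ih

theorem sum_Icc_natCast_mul_pow_sub {R : Type*} [CommRing R] (q : R) (s m : ℕ) :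
    ∑ i ∈ Icc (s + 1) (s + m), (i : R) * q ^ (i - s) =
      q * ∑ k ∈ range m, ((s + 1 : R) + k) * q ^ k := by
  induction m with
  | zero => simp
  | succ m ih =>
    rw [← add_assoc, sum_Icc_succ_top (by omega), ih, sum_range_succ,
      show s + m + 1 - s = m + 1 by omega]
    push_cast
    ring

theorem expected_age_closed_form_general (M s : ℕ) (p : ℝ)
    (hp : 0 < p)
    (hs1 : 1 ≤ s) (hsM : s ≤ M - 1) :
    Aage M p s =
      (p ^ 2 * (s : ℝ) ^ 2 - p ^ 2 * (s : ℝ) - 2 * (1 - p) ^ (M - s) * (1 - p)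
          + 2 * (s : ℝ) * p + 2 - 2 * p)
        / (2 * p * ((s : ℝ) * p + 1 - p)) := by
  obtain ⟨m, rfl⟩ : ∃ m, M = s + m + 1 := ⟨M - s - 1, by omega⟩
  have hs : (1 : ℝ) ≤ s := by exact_mod_cast hs1
  -- `s p + 1 - p = (s - 1) p + 1 > 0`
  have hden : (s : ℝ) * p + 1 - p ≠ 0 := by nlinarith
  have gauss := sum_Icc_one_natCast_mul_two (R := ℝ) s
  have tail := one_sub_sq_mul_sum_range_add_mul_pow ((s : ℝ) + 1) (1 - p) m
  rw [Aage, show s + m + 1 - 1 = s + m by omega, show s + m + 1 - s = m + 1 by omega,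
    sum_Icc_natCast_mul_pow_sub, show (s : ℝ) + (1 - p) / p = (s * p + 1 - p) / p by
      field_simp; ring]
  push_cast
  field_simp
  linear_combination 2 * (1 - p) * tail + p ^ 2 * gauss

/-- Closed form for the expected age of the threshold-`s` policy. -/
theorem expected_age_closed_form (M s : ℕ) (p : ℝ)
    (hM : 2 ≤ M) (hp : 0 < p) (hp1 : p < 1)
    (hs1 : 1 ≤ s) (hsM : s ≤ M - 1) :
    Aage M p s =
      (p ^ 2 * (s : ℝ) ^ 2 - p ^ 2 * (s : ℝ) - 2 * (1 - p) ^ (M - s) * (1 - p)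
          + 2 * (s : ℝ) * p + 2 - 2 * p)
        / (2 * p * ((s : ℝ) * p + 1 - p)) :=
  expected_age_closed_form_general M s p hp hs1 hsM
end

section
/- The expected age is strictly increasing in the threshold: for every integer s with 1 ≤ s ≤ M−2, A(s) < A(s+1). -/
/-!
Write `A(s) = N(s) / D(s)` with `D(s) = s + (1-p)/p`, so that `D(s+1) = D(s) + 1`, and
`N(s) = (1 + ⋯ + s) + T(s)`, where the tail `T(s) = ∑_{i>s} min(i, M) (1-p)^{i-s}` satisfies
`T(s) = (1-p) (s + 1 + T(s+1))`. This recursion shows that `T` is nondecreasing and that the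
increment `Δ = N(s+1) - N(s)` satisfies `(1-p)/p · Δ = T(s)`. As `(N + Δ)/(D + 1) > N/D` iff
`N < D Δ`, the claim reduces to `1 + ⋯ + s < s Δ`, which holds because `Δ ≥ s + 1`.
-/

open Finset

theorem div_lt_add_div_add_one {α : Type*} [Field α] [LinearOrder α] [IsStrictOrderedRing α]
    {a b d : α} (hd : 0 < d) (h : a < d * b) : a / d < (a + b) / (d + 1) := by
  rw [div_lt_div_iff₀ hd (by linarith)]
  linarith

noncomputable def ageTail (M : ℕ) (p : ℝ) (s : ℕ) : ℝ :=
  (∑ i ∈ Icc (s + 1) (M - 1), (i : ℝ) * (1 - p) ^ (i - s)) + M * (1 - p) ^ (M - s) / p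

theorem Aage_eq_div (M : ℕ) (p : ℝ) (s : ℕ) :
    Aage M p s = ((∑ i ∈ Icc 1 s, (i : ℝ)) + ageTail M p s) / (s + (1 - p) / p) := by
  rw [Aage, ageTail, add_assoc, inv_mul_eq_div]

theorem ageTail_eq_of_succ_lt {M s : ℕ} (p : ℝ) (h : s + 1 < M) :
    ageTail M p s = (1 - p) * ((s + 1) + ageTail M p (s + 1)) := by
  have hshift : ∑ i ∈ Icc (s + 1 + 1) (M - 1), (i : ℝ) * (1 - p) ^ (i - s)
      = (1 - p) * ∑ i ∈ Icc (s + 1 + 1) (M - 1), (i : ℝ) * (1 - p) ^ (i - (s + 1)) := by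
    rw [mul_sum]
    refine sum_congr rfl fun i hi => ?_
    rw [show i - s = i - (s + 1) + 1 by grind, pow_succ]
    ring
  rw [ageTail, ageTail, Icc_eq_cons_Ioc (by omega), sum_cons, ← Icc_add_one_left_eq_Ioc, hshift,
    show M - s = M - (s + 1) + 1 by omega, Nat.add_sub_cancel_left, pow_succ]
  push_cast
  ring

theorem mul_ageTail_ge {M s : ℕ} {p : ℝ} (hp : p ≠ 0) (hp1 : p ≤ 1) (h : s < M) :
    (s + 1) * (1 - p) ≤ p * ageTail M p s := by
  obtain ⟨k, rfl⟩ : ∃ k, M = s + 1 + k := ⟨M - (s + 1), by omega⟩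
  induction k generalizing s with
  | zero =>
    rw [ageTail, Icc_eq_empty (by omega), sum_empty, show s + 1 + 0 - s = 1 by omega]
    field_simp
    push_cast
    linarith
  | succ k ih =>
    have ih' := ih (s := s + 1) (by omega)
    rw [show s + 1 + (k + 1) = s + 1 + 1 + k by omega, ageTail_eq_of_succ_lt p (by omega)]
    push_cast at ih' ⊢
    have hq : 0 ≤ 1 - p := by linarith
    nlinarith [mul_le_mul_of_nonneg_left ih' hq]

theorem ageTail_le_ageTail_succ {M s : ℕ} {p : ℝ} (hp : p ≠ 0) (hp1 : p ≤ 1) (h : s + 1 < M) :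
    ageTail M p s ≤ ageTail M p (s + 1) := by
  have hrec := ageTail_eq_of_succ_lt p h
  have hlow := mul_ageTail_ge hp hp1 h
  push_cast at hlow
  nlinarith

theorem expected_age_strict_mono_general (M s : ℕ) (p : ℝ)
    (hp : 0 < p) (hp1 : p < 1)
    (hs1 : 1 ≤ s) (hsM : s ≤ M - 2) :
    Aage M p s < Aage M p (s + 1) := by
  have hsM' : s + 1 < M := by omega
  set G := ∑ i ∈ Icc 1 s, (i : ℝ)
  set u := (1 - p) / p
  set T₀ := ageTail M p s
  set Δ := (s + 1) + ageTail M p (s + 1) - T₀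
  have hs : (1 : ℝ) ≤ s := by exact_mod_cast hs1
  have hu : 0 ≤ u := div_nonneg (by linarith) hp.le
  have huΔ : u * Δ = T₀ := by
    have hqΔ : (1 - p) * Δ = p * T₀ := by linear_combination -ageTail_eq_of_succ_lt p hsM'
    rw [div_mul_eq_mul_div, hqΔ, mul_div_cancel_left₀ _ hp.ne']
  have hΔ : (s : ℝ) + 1 ≤ Δ := by linarith [ageTail_le_ageTail_succ hp.ne' hp1.le hsM']
  have hGΔ : G < s * Δ := calc
    G ≤ s * s := by
      simpa using sum_le_card_nsmul (Icc 1 s) (fun i : ℕ => (i : ℝ)) s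
        fun i hi => by exact_mod_cast (mem_Icc.1 hi).2
    _ < s * (s + 1) := by linarith
    _ ≤ s * Δ := by gcongr
  have hA₁ : Aage M p (s + 1) = (G + T₀ + Δ) / (s + u + 1) := by
    rw [Aage_eq_div, sum_Icc_succ_top (by omega)]
    simp only [G, T₀, Δ, u]
    push_cast
    ring
  rw [Aage_eq_div, hA₁]
  exact div_lt_add_div_add_one (by linarith) (by linarith)

/-- The expected age is strictly increasing in the threshold. -/
theorem expected_age_strict_mono (M s : ℕ) (p : ℝ)
    (hM : 2 ≤ M) (hp : 0 < p) (hp1 : p < 1)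
    (hs1 : 1 ≤ s) (hsM : s ≤ M - 2) :
    Aage M p s < Aage M p (s + 1) :=
  expected_age_strict_mono_general M s p hp hp1 hs1 hsM
end

section
/- For every integer s with 1 ≤ s ≤ M−1 and every p with 0 < p < 1, the expected age strictly exceeds its value at p = 1: A(s) > (s+1)/2. (Equivalently, A(s,1) = (1/s)·Σ_{i=1}^{s} i = (s+1)/2 and A(s,1) < A(s,p) for all 0 < p < 1.) -/
/-!
Read `Aage` as a weighted mean of ages: weight `1` on the ages `1, …, s`, weight `q ^ (i - s)`
(with `q = 1 - p`) on the ages `i = s + 1, …, M - 1`, and weight `q ^ (M - s) / p` on `M`.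
The weights beyond `s` are the tail of the geometric series, so they add up to `q / p`.
Every age beyond `s` is at least `s + 1`, so the numerator is at least
`s (s + 1) / 2 + (s + 1) q / p`, which exceeds `(s + 1) / 2 · (s + q / p)` as soon as `q > 0`.
-/

open Finset

theorem sum_Icc_one_natCast (m : ℕ) : ∑ i ∈ Icc 1 m, (i : ℝ) = m * (m + 1) / 2 := by
  induction m with
  | zero => simp
  | succ m ih =>
    rw [sum_Icc_succ_top (by omega), ih]
    push_cast
    ring

theorem sum_Icc_pow_sub_add_geom_tail {q : ℝ} (hq : q ≠ 1) (s n : ℕ) :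
    ∑ i ∈ Icc (s + 1) (s + n), q ^ (i - s) + q ^ (n + 1) / (1 - q) = q / (1 - q) := by
  induction n with
  | zero => simp
  | succ n ih =>
    have h1q : 1 - q ≠ 0 := sub_ne_zero.mpr hq.symm
    have hlast : s + n + 1 - s = n + 1 := by omega
    rw [← add_assoc, sum_Icc_succ_top (by omega), hlast, ← ih]
    field_simp
    ring

theorem add_one_mul_div_le_sum_tail {M s : ℕ} {p : ℝ} (hp : 0 < p) (hp1 : p ≤ 1) (hsM : s < M) :
    ((s : ℝ) + 1) * ((1 - p) / p) ≤
      ∑ i ∈ Icc (s + 1) (M - 1), (i : ℝ) * (1 - p) ^ (i - s) + M * (1 - p) ^ (M - s) / p := by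
  obtain ⟨n, rfl⟩ : ∃ n, M = s + 1 + n := ⟨M - (s + 1), by omega⟩
  have hq : 0 ≤ 1 - p := by linarith
  have hq1 : 1 - p ≠ 1 := by linarith
  have hupper : s + 1 + n - 1 = s + n := by omega
  have hexp : s + 1 + n - s = n + 1 := by omega
  have hsM' : (s : ℝ) + 1 ≤ (s + 1 + n : ℕ) := by exact_mod_cast (by omega : s + 1 ≤ s + 1 + n)
  have hgeom := sum_Icc_pow_sub_add_geom_tail hq1 s n
  rw [sub_sub_cancel] at hgeom
  rw [hupper, hexp]
  calc ((s : ℝ) + 1) * ((1 - p) / p)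
      = ∑ i ∈ Icc (s + 1) (s + n), ((s : ℝ) + 1) * (1 - p) ^ (i - s)
          + ((s : ℝ) + 1) * (1 - p) ^ (n + 1) / p := by
        rw [← hgeom, mul_add, mul_sum, mul_div_assoc]
    _ ≤ _ := by
        gcongr with i hi
        exact_mod_cast (mem_Icc.mp hi).1

theorem expected_age_gt_perfect_coverage_general (M s : ℕ) (p : ℝ)
    (hM : 2 ≤ M) (hp : 0 < p) (hp1 : p < 1)
    (hsM : s ≤ M - 1) :
    ((s : ℝ) + 1) / 2 < Aage M p s := by
  have hr : 0 < (1 - p) / p := div_pos (by linarith) hp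
  have htail := add_one_mul_div_le_sum_tail (M := M) (s := s) hp hp1.le (by omega)
  have hgain : 0 < ((s : ℝ) + 1) * ((1 - p) / p) := by positivity
  rw [Aage, inv_mul_eq_div, lt_div_iff₀ (by positivity), sum_Icc_one_natCast]
  linarith

/-- For `0 < p < 1`, the expected age strictly exceeds its value at `p = 1`,
namely `(1/s)·Σ_{i=1}^{s} i = (s+1)/2`. -/
theorem expected_age_gt_perfect_coverage (M s : ℕ) (p : ℝ)
    (hM : 2 ≤ M) (hp : 0 < p) (hp1 : p < 1)
    (hs1 : 1 ≤ s) (hsM : s ≤ M - 1) :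
    ((s : ℝ) + 1) / 2 < Aage M p s :=
  expected_age_gt_perfect_coverage_general M s p hM hp hp1 hsM
end

section
/- The relative value function of the WiFi-only aging-control problem is nonincreasing: if V : {1,...,M} → ℝ and g ∈ ℝ satisfy the Bellman optimality equations, then V(x) ≥ V(y) for all x, y ∈ {1,...,M} with x ≤ y. -/
/-!
With `t = V (min (x+1) M)` the Bellman equation reads `V x = (U x - g) + φ t`, where
`φ t = max t (c + (1 - p) t)` is monotone because `1 - p ≥ 0`. For such a backward recursion with
`U` antitone, `V (x+1) ≤ V x` propagates downwards from `x = M`, where `min (M+1) M = M` makes it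
an equality.
-/

open Set

section BackwardRecursion

variable {α : Type*} [AddCommMonoid α] [PartialOrder α] [IsOrderedAddMonoid α]
  {M : ℕ} {U V : ℕ → α} {φ : α → α}

theorem le_of_backward_recursion (hφ : Monotone φ) (hU : AntitoneOn U (Icc 1 M))
    (hV : ∀ x ∈ Icc 1 M, V x = U x + φ (V (min (x + 1) M))) {x : ℕ} (hx : x ∈ Icc 1 M) :
    V (min (x + 1) M) ≤ V x := by
  induction hx.2 using Nat.decreasingInduction with
  | self => rw [min_eq_right (Nat.le_succ M)]
  | of_succ k hk ih =>
    have hk1 : 1 ≤ k := hx.1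
    have hmem : k + 1 ∈ Icc 1 M := ⟨Nat.le_add_left 1 k, hk⟩
    rw [min_eq_left hk]
    calc V (k + 1) = U (k + 1) + φ (V (min (k + 1 + 1) M)) := hV _ hmem
      _ ≤ U k + φ (V (k + 1)) :=
          add_le_add (hU ⟨hk1, hk.le⟩ hmem (Nat.le_succ k)) (hφ (ih hmem))
      _ = V k := by rw [hV k ⟨hk1, hk.le⟩, min_eq_left hk]

theorem antitoneOn_of_backward_recursion (hφ : Monotone φ) (hU : AntitoneOn U (Icc 1 M))
    (hV : ∀ x ∈ Icc 1 M, V x = U x + φ (V (min (x + 1) M))) : AntitoneOn V (Icc 1 M) := by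
  refine antitoneOn_of_succ_le ordConnected_Icc fun x _ hx hx1 => ?_
  rw [Order.succ_eq_add_one] at hx1 ⊢
  simpa only [min_eq_left hx1.2] using le_of_backward_recursion hφ hU hV hx

end BackwardRecursion

theorem monotone_max_affine {p : ℝ} (hp : p ≤ 1) (c : ℝ) :
    Monotone fun t : ℝ => max t (c + (1 - p) * t) :=
  monotone_id.max (monotone_const.add (monotone_id.const_mul (sub_nonneg.2 hp)))

theorem value_function_nonincreasing_general (M : ℕ) (p G P B g : ℝ) (U V : ℕ → ℝ)
    (hp1 : p < 1)
    (hU : ∀ ⦃x y : ℕ⦄, 1 ≤ x → x ≤ y → y ≤ M → U y ≤ U x)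
    (hV : ∀ x : ℕ, 1 ≤ x → x ≤ M →
      V x + g = max (U x + V (min (x + 1) M))
        (U x - G + p * (V 1 - P + B) + (1 - p) * V (min (x + 1) M))) :
    ∀ ⦃x y : ℕ⦄, 1 ≤ x → x ≤ y → y ≤ M → V y ≤ V x := by
  have hU' : AntitoneOn (fun x => U x - g) (Icc 1 M) :=
    fun x hx y hy hxy => sub_le_sub_right (hU hx.1 hxy hy.2) g
  have hV' : ∀ x ∈ Icc 1 M, V x = (U x - g) + max (V (min (x + 1) M))
      (-G + p * (V 1 - P + B) + (1 - p) * V (min (x + 1) M)) := by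
    intro x hx
    rw [add_max, eq_sub_of_add_eq (hV x hx.1 hx.2), ← max_sub_sub_right]
    congr 1 <;> ring
  intro x y hx hxy hy
  exact antitoneOn_of_backward_recursion (monotone_max_affine hp1.le _) hU' hV'
    ⟨hx, hxy.trans hy⟩ ⟨hx.trans hxy, hy⟩ hxy

/-- The relative value function of the WiFi-only aging-control problem is
nonincreasing: any solution `(V, g)` of the average-reward Bellman optimality
equations satisfies `V(y) ≤ V(x)` whenever `1 ≤ x ≤ y ≤ M`. -/
theorem value_function_nonincreasing (M : ℕ) (p G P B g : ℝ) (U V : ℕ → ℝ)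
    (hM : 2 ≤ M) (hp : 0 < p) (hp1 : p < 1)
    (hU : ∀ ⦃x y : ℕ⦄, 1 ≤ x → x ≤ y → y ≤ M → U y ≤ U x)
    (hV : ∀ x : ℕ, 1 ≤ x → x ≤ M →
      V x + g = max (U x + V (min (x + 1) M))
        (U x - G + p * (V 1 - P + B) + (1 - p) * V (min (x + 1) M))) :
    ∀ ⦃x y : ℕ⦄, 1 ≤ x → x ≤ y → y ≤ M → V y ≤ V x :=
  value_function_nonincreasing_general M p G P B g U V hp1 hU hV
end

section
/- Suppose V : {1,...,M} → ℝ and g ∈ ℝ satisfy the Bellman optimality equations. Then the optimal policy has threshold structure: there exists s ∈ {1,...,M+1} such that for every x ∈ {1,...,M} with x < s the inactive term attains the maximum, i.e. U(x) + V(min(x+1,M)) ≥ U(x) − G + p·(V(1) − P + B) + (1−p)·V(min(x+1,M)), and for every x with x ≥ s the activation term attains the maximum, i.e. U(x) − G + p·(V(1) − P + B) + (1−p)·V(min(x+1,M)) ≥ U(x) + V(min(x+1,M)). -/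
/-- Threshold structure of the optimal WiFi-only policy: for any solution `(V, g)`
of the Bellman optimality equations there is a threshold `s ∈ {1,...,M+1}` such
that below `s` the inactive action attains the maximum and at or above `s` the
WiFi activation action attains the maximum. -/
theorem optimal_policy_threshold (M : ℕ) (p G P B g : ℝ) (U V : ℕ → ℝ)
    (hM : 2 ≤ M) (hp : 0 < p) (hp1 : p < 1)
    (hU : ∀ ⦃x y : ℕ⦄, 1 ≤ x → x ≤ y → y ≤ M → U y ≤ U x)
    (hV : ∀ x : ℕ, 1 ≤ x → x ≤ M →
      V x + g = max (U x + V (min (x + 1) M))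
        (U x - G + p * (V 1 - P + B) + (1 - p) * V (min (x + 1) M))) :
    ∃ s : ℕ, 1 ≤ s ∧ s ≤ M + 1 ∧
      (∀ x : ℕ, 1 ≤ x → x ≤ M → x < s →
        U x - G + p * (V 1 - P + B) + (1 - p) * V (min (x + 1) M)
          ≤ U x + V (min (x + 1) M)) ∧
      (∀ x : ℕ, s ≤ x → x ≤ M →
        U x + V (min (x + 1) M)
          ≤ U x - G + p * (V 1 - P + B) + (1 - p) * V (min (x + 1) M)) := by
  set c : ℝ := V 1 - P + B with hc
  set f : ℝ → ℝ := fun w => max w (-G + p * c + (1 - p) * w) with hf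
  have hfmono : ∀ w w' : ℝ, w ≤ w' → f w ≤ f w' := by
    intro w w' hww
    exact max_le_max hww (by nlinarith)
  have hstep : ∀ x : ℕ, 1 ≤ x → x ≤ M →
      V x = U x + f (V (min (x + 1) M)) - g := by
    intro x hx1 hxM
    have h := hV x hx1 hxM
    have : max (U x + V (min (x + 1) M))
        (U x - G + p * c + (1 - p) * V (min (x + 1) M))
        = U x + f (V (min (x + 1) M)) := by
      have : U x - G + p * c + (1 - p) * V (min (x + 1) M)
          = U x + (-G + p * c + (1 - p) * V (min (x + 1) M)) := by ring
      rw [this, hf, ← max_add_add_left]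
    linarith [h, this]
  -- V(x+1) ≤ V x for 1 ≤ x < M
  have hdec1 : ∀ n : ℕ, ∀ x : ℕ, M - n ≤ x → 1 ≤ x → x < M → V (x + 1) ≤ V x := by
    intro n
    induction n with
    | zero => intro x h1 h2 h3; omega
    | succ n ih =>
      intro x h1 h2 h3
      have hx1M : x + 1 ≤ M := h3
      have e1 : V x = U x + f (V (min (x + 1) M)) - g := hstep x h2 (le_of_lt h3)
      have e2 : V (x + 1) = U (x + 1) + f (V (min (x + 2) M)) - g :=
        hstep (x + 1) (by omega) hx1M
      have hU' : U (x + 1) ≤ U x := hU h2 (Nat.le_succ x) hx1M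
      have hfle : f (V (min (x + 2) M)) ≤ f (V (min (x + 1) M)) := by
        rcases Nat.lt_or_ge (x + 1) M with hlt | hge
        · have m1 : min (x + 1) M = x + 1 := by omega
          have m2 : min (x + 2) M = x + 2 := by omega
          rw [m1, m2]
          exact hfmono _ _ (ih (x + 1) (by omega) (by omega) hlt)
        · have m1 : min (x + 1) M = M := by omega
          have m2 : min (x + 2) M = M := by omega
          rw [m1, m2]
      linarith
  have hdec : ∀ x y : ℕ, 1 ≤ x → x ≤ y → y ≤ M → V y ≤ V x := by
    intro x y hx hxy hyM
    induction y, hxy using Nat.le_induction with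
    | base => exact le_refl _
    | succ y hy ih =>
      have h1 : V (y + 1) ≤ V y := hdec1 M y (by omega) (by omega) (by omega)
      exact le_trans h1 (ih (by omega))
  -- the activation condition
  by_cases hS : ∃ x : ℕ, 1 ≤ x ∧ x ≤ M ∧ G + p * V (min (x + 1) M) ≤ p * c
  · set S : Set ℕ := {x | 1 ≤ x ∧ x ≤ M ∧ G + p * V (min (x + 1) M) ≤ p * c} with hSdef
    have hSne : S.Nonempty := hS
    refine ⟨sInf S, ?_, ?_, ?_, ?_⟩
    · exact (Nat.sInf_mem hSne).1
    · exact le_trans (Nat.sInf_mem hSne).2.1 (Nat.le_succ M)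
    · intro x hx1 hxM hxs
      have hnot : x ∉ S := Nat.notMem_of_lt_sInf hxs
      have : ¬ (G + p * V (min (x + 1) M) ≤ p * c) := by
        intro h; exact hnot ⟨hx1, hxM, h⟩
      push_neg at this
      linarith
    · intro x hsx hxM
      obtain ⟨hs1, hsM, hscond⟩ := Nat.sInf_mem hSne
      have hmin : V (min (x + 1) M) ≤ V (min (sInf S + 1) M) := by
        apply hdec
        · omega
        · omega
        · omega
      have : p * V (min (x + 1) M) ≤ p * V (min (sInf S + 1) M) :=
        mul_le_mul_of_nonneg_left hmin (le_of_lt hp)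
      linarith
  · push_neg at hS
    refine ⟨M + 1, by omega, le_refl _, ?_, ?_⟩
    · intro x hx1 hxM _
      have := hS x hx1 hxM
      linarith
    · intro x hsx hxM; omega
end

section
/- The relative value function of the hybrid WiFi/3G aging-control problem is nonincreasing: assume U is nonincreasing with U(M) = 0, and suppose V : {1,...,M} → ℝ and g ∈ ℝ satisfy V(x) + g = max( F₀(x), F₁(x), F₂(x) ) for every x ∈ {1,...,M}. Then V(x) ≥ V(y) for all x, y ∈ {1,...,M} with x ≤ y. -/
/-!
Downward induction on the age shows `V x⁺ ≤ V x` for `1 ≤ x ≤ M`; at `x = M` this is trivial since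
`M⁺ = M`. Each action value is nondecreasing in `U x` and in `V x⁺` (the latter enters with weight
`1`, `1 - p` or `0`), so if `V` does not increase from `x + 1` to its successor, none of the three
action values increases from `x` to `x + 1`, and neither does their maximum `V + g`.
-/

/-- Action value of remaining inactive at age `x`. -/
noncomputable def F0 (M : ℕ) (U V : ℕ → ℝ) (x : ℕ) : ℝ :=
  U x + V (min (x + 1) M)

/-- Action value of activating WiFi at age `x`. -/
noncomputable def F1 (M : ℕ) (p G P B : ℝ) (U V : ℕ → ℝ) (x : ℕ) : ℝ :=
  U x - G + p * V 1 + (1 - p) * V (min (x + 1) M) - p * P + p * B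

/-- Action value of activating WiFi with 3G fallback at age `x`. -/
noncomputable def F2 (p G P P3G B : ℝ) (U V : ℕ → ℝ) (x : ℕ) : ℝ :=
  U x - G + V 1 - p * P - (1 - p) * P3G + B

section Bellman

variable {M : ℕ} {p G P P3G B g : ℝ} {U V : ℕ → ℝ}

theorem max_actionValues_le_of_le (hp1 : p ≤ 1) {x y : ℕ} (hU : U y ≤ U x)
    (hV : V (min (y + 1) M) ≤ V (min (x + 1) M)) :
    max (F0 M U V y) (max (F1 M p G P B U V y) (F2 p G P P3G B U V y)) ≤
      max (F0 M U V x) (max (F1 M p G P B U V x) (F2 p G P P3G B U V x)) := by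
  have hV' := mul_le_mul_of_nonneg_left hV (sub_nonneg.2 hp1)
  refine max_le_max ?_ (max_le_max ?_ ?_)
  · unfold F0; linarith
  · unfold F1; linarith
  · unfold F2; linarith

theorem value_next_le_of_bellman (hp1 : p ≤ 1)
    (hU : ∀ ⦃x y : ℕ⦄, 1 ≤ x → x ≤ y → y ≤ M → U y ≤ U x)
    (hV : ∀ x : ℕ, 1 ≤ x → x ≤ M →
      V x + g = max (F0 M U V x) (max (F1 M p G P B U V x) (F2 p G P P3G B U V x)))
    {x : ℕ} (hx : 1 ≤ x) (hxM : x ≤ M) : V (min (x + 1) M) ≤ V x := by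
  induction hxM using Nat.decreasingInduction with
  | self => rw [min_eq_right (Nat.le_succ M)]
  | of_succ k hk ih =>
    have hk' : k + 1 ≤ M := hk
    rw [min_eq_left hk']
    have hnext : V (min (k + 1 + 1) M) ≤ V (min (k + 1) M) := by
      rw [min_eq_left hk']; exact ih (by omega)
    have hmax := max_actionValues_le_of_le (G := G) (P := P) (P3G := P3G) (B := B) hp1
      (hU hx k.le_succ hk) hnext
    linarith [hV k hx hk.le, hV (k + 1) (by omega) hk]

end Bellman

theorem hybrid_value_function_nonincreasing_general (M : ℕ) (p G P P3G B g : ℝ) (U V : ℕ → ℝ)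
    (hp1 : p < 1)
    (hU : ∀ ⦃x y : ℕ⦄, 1 ≤ x → x ≤ y → y ≤ M → U y ≤ U x)
    (hV : ∀ x : ℕ, 1 ≤ x → x ≤ M →
      V x + g = max (F0 M U V x)
        (max (F1 M p G P B U V x) (F2 p G P P3G B U V x))) :
    ∀ ⦃x y : ℕ⦄, 1 ≤ x → x ≤ y → y ≤ M → V y ≤ V x := by
  have hanti : AntitoneOn V (Set.Icc 1 M) := by
    refine antitoneOn_of_succ_le Set.ordConnected_Icc fun a _ ha hsucc => ?_
    rw [Order.succ_eq_add_one] at hsucc ⊢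
    have := value_next_le_of_bellman hp1.le hU hV ha.1 ha.2
    rwa [min_eq_left hsucc.2] at this
  intro x y hx hxy hyM
  exact hanti ⟨hx, hxy.trans hyM⟩ ⟨hx.trans hxy, hyM⟩ hxy

/-- The relative value function of the hybrid WiFi/3G aging-control problem is
nonincreasing: any solution `(V, g)` of the three-action Bellman optimality
equations satisfies `V(y) ≤ V(x)` whenever `1 ≤ x ≤ y ≤ M`. -/
theorem hybrid_value_function_nonincreasing (M : ℕ) (p G P P3G B g : ℝ) (U V : ℕ → ℝ)
    (hM : 2 ≤ M) (hp : 0 < p) (hp1 : p < 1)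
    (hU : ∀ ⦃x y : ℕ⦄, 1 ≤ x → x ≤ y → y ≤ M → U y ≤ U x)
    (hUM : U M = 0)
    (hV : ∀ x : ℕ, 1 ≤ x → x ≤ M →
      V x + g = max (F0 M U V x)
        (max (F1 M p G P B U V x) (F2 p G P P3G B U V x))) :
    ∀ ⦃x y : ℕ⦄, 1 ≤ x → x ≤ y → y ≤ M → V y ≤ V x :=
  hybrid_value_function_nonincreasing_general M p G P P3G B g U V hp1 hU hV
end

section
/- Assume U is nonincreasing with U(M) = 0, and suppose V : {1,...,M} → ℝ and g ∈ ℝ satisfy V(x) + g = max( F₀(x), F₁(x), F₂(x) ) for every x ∈ {1,...,M}. Then the optimal policy has a two-threshold structure: there exist s, s₃G ∈ {1,...,M+1} with s ≤ s₃G such that for every x ∈ {1,...,M}: if x < s then F₀(x) = max(F₀(x), F₁(x), F₂(x)); if s ≤ x < s₃G then F₁(x) = max(F₀(x), F₁(x), F₂(x)); and if x ≥ s₃G then F₂(x) = max(F₀(x), F₁(x), F₂(x)). Moreover, if P₃G < G/p + P then one may take s = s₃G, i.e. the WiFi action is never needed. -/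
/-- A monotone property on `{1,...,M}` has a threshold in `{1,...,M+1}`. -/
lemma thresh_exists (M : ℕ) (Q : ℕ → Prop)
    (hmono : ∀ x y, 1 ≤ x → x ≤ y → y ≤ M → Q x → Q y) :
    ∃ s : ℕ, 1 ≤ s ∧ s ≤ M + 1 ∧ ∀ x, 1 ≤ x → x ≤ M → (s ≤ x ↔ Q x) := by
  classical
  by_cases h : ∃ x, 1 ≤ x ∧ x ≤ M ∧ Q x
  · obtain ⟨h1, hM, hQ⟩ := Nat.find_spec h
    refine ⟨Nat.find h, h1, by omega, fun x hx1 hxM =>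
      ⟨fun hle => hmono _ x h1 hle hxM hQ, fun hQx => ?_⟩⟩
    by_contra hlt
    exact Nat.find_min h (show x < Nat.find h by omega) ⟨hx1, hxM, hQx⟩
  · exact ⟨M + 1, by omega, le_rfl, fun x hx1 hxM =>
      ⟨fun hle => absurd hle (by omega), fun hQx => absurd ⟨x, hx1, hxM, hQx⟩ h⟩⟩

/-- Two-threshold structure of the optimal hybrid WiFi/3G policy: for any solution
`(V, g)` of the three-action Bellman optimality equations there are thresholds
`s ≤ s₃G` in `{1,...,M+1}` such that the inactive action is optimal below `s`,
the WiFi action is optimal on `[s, s₃G)`, and the 3G action is optimal at or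
above `s₃G`; moreover if `P₃G < G/p + P` one may take `s = s₃G`. -/
theorem hybrid_two_threshold_structure (M : ℕ) (p G P P3G B g : ℝ) (U V : ℕ → ℝ)
    (hM : 2 ≤ M) (hp : 0 < p) (hp1 : p < 1)
    (hU : ∀ ⦃x y : ℕ⦄, 1 ≤ x → x ≤ y → y ≤ M → U y ≤ U x)
    (hUM : U M = 0)
    (hV : ∀ x : ℕ, 1 ≤ x → x ≤ M →
      V x + g = max (F0 M U V x)
        (max (F1 M p G P B U V x) (F2 p G P P3G B U V x))) :
    ∃ s s3G : ℕ, 1 ≤ s ∧ s ≤ s3G ∧ s3G ≤ M + 1 ∧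
      (∀ x : ℕ, 1 ≤ x → x ≤ M → x < s →
        F0 M U V x = max (F0 M U V x)
          (max (F1 M p G P B U V x) (F2 p G P P3G B U V x))) ∧
      (∀ x : ℕ, s ≤ x → x < s3G → x ≤ M →
        F1 M p G P B U V x = max (F0 M U V x)
          (max (F1 M p G P B U V x) (F2 p G P P3G B U V x))) ∧
      (∀ x : ℕ, s3G ≤ x → x ≤ M →
        F2 p G P P3G B U V x = max (F0 M U V x)
          (max (F1 M p G P B U V x) (F2 p G P P3G B U V x))) ∧
      (P3G < G / p + P → s = s3G) := by
  classical
  -- V is nonincreasing on {1,...,M}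
  have key : ∀ d x, 1 ≤ x → x ≤ M → M - x ≤ d → ∀ y, x ≤ y → y ≤ M → V y ≤ V x := by
    intro d
    induction d with
    | zero =>
      intro x hx1 hxM hd y hxy hyM
      have hx : x = M := by omega
      have hy : y = M := by omega
      rw [hx, hy]
    | succ d ih =>
      intro x hx1 hxM hd y hxy hyM
      by_cases hxeq : x = M
      · have hy : y = M := by omega
        rw [hxeq, hy]
      · have hxM' : x + 1 ≤ M := by omega
        have IH : ∀ z, x + 1 ≤ z → z ≤ M → V z ≤ V (x + 1) :=
          ih (x + 1) (by omega) hxM' (by omega)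
        rcases Nat.eq_or_lt_of_le hxy with heq | hlt
        · rw [← heq]
        · have h1 : V y ≤ V (x + 1) := IH y (by omega) hyM
          have hstep : V (x + 1) ≤ V x := by
            have hBx := hV x hx1 hxM
            have hBx1 := hV (x + 1) (by omega) hxM'
            have hU1 : U (x + 1) ≤ U x := hU hx1 (by omega) hxM'
            have hmin : min (x + 1) M = x + 1 := by omega
            have hmin2 : x + 1 ≤ min (x + 1 + 1) M := by omega
            have hmin2' : min (x + 1 + 1) M ≤ M := by omega
            have hV2 : V (min (x + 1 + 1) M) ≤ V (x + 1) := IH _ hmin2 hmin2'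
            have hA : F0 M U V (x + 1) ≤ F0 M U V x := by
              simp only [F0, hmin]; linarith
            have hB : F1 M p G P B U V (x + 1) ≤ F1 M p G P B U V x := by
              simp only [F1, hmin]
              nlinarith [mul_le_mul_of_nonneg_left hV2 (by linarith : (0:ℝ) ≤ 1 - p)]
            have hC : F2 p G P P3G B U V (x + 1) ≤ F2 p G P P3G B U V x := by
              simp only [F2]; linarith
            have := max_le_max hA (max_le_max hB hC)
            linarith [hBx, hBx1, this]
          linarith
  have Vmono : ∀ x y : ℕ, 1 ≤ x → x ≤ y → y ≤ M → V y ≤ V x := fun x y hx hxy hyM =>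
    key (M - x) x hx (le_trans hxy hyM) le_rfl y hxy hyM
  -- monotone "drop" function
  set f : ℕ → ℝ := fun x => V 1 - V (min (x + 1) M) with hf
  have fmono : ∀ x y : ℕ, 1 ≤ x → x ≤ y → y ≤ M → f x ≤ f y := by
    intro x y hx hxy hyM
    have := Vmono (min (x + 1) M) (min (y + 1) M) (by omega) (by omega) (by omega)
    simp only [hf]
    linarith
  -- constants
  set a : ℝ := G + p * P - p * B with ha
  set b : ℝ := (1 - p) * (P3G - B) with hb
  -- comparison lemmas between the action values
  have cmp10 : ∀ x : ℕ, F1 M p G P B U V x - F0 M U V x = p * f x - a := by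
    intro x; simp only [F0, F1, hf, ha]; ring
  have cmp20 : ∀ x : ℕ, F2 p G P P3G B U V x - F0 M U V x = f x - (a + b) := by
    intro x; simp only [F0, F2, hf, ha, hb]; ring
  have cmp21 : ∀ x : ℕ, F2 p G P P3G B U V x - F1 M p G P B U V x = (1 - p) * f x - b := by
    intro x; simp only [F1, F2, hf, hb]; ring
  -- the given strict inequality in the final clause is equivalent to p*b < (1-p)*a
  have hpPiff : (P3G < G / p + P) ↔ p * P3G < G + p * P := by
    rw [div_add' _ _ _ hp.ne', lt_div_iff₀ hp]
    constructor <;> intro h <;> nlinarith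
  have hequiv : (P3G < G / p + P) ↔ p * b < (1 - p) * a := by
    rw [hpPiff, ha, hb]
    constructor <;> intro h
    · nlinarith [mul_lt_mul_of_pos_left h (by linarith : (0:ℝ) < 1 - p)]
    · nlinarith
  by_cases hcase : (1 - p) * a ≤ p * b
  · -- two genuinely distinct thresholds
    obtain ⟨s, hs1, hsM1, hsiff⟩ := thresh_exists M (fun x => a ≤ p * f x)
      (fun x y hx hxy hyM hQ => le_trans hQ
        (mul_le_mul_of_nonneg_left (fmono x y hx hxy hyM) hp.le))
    obtain ⟨s3, hs31, hs3M1, hs3iff⟩ := thresh_exists M (fun x => b ≤ (1 - p) * f x)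
      (fun x y hx hxy hyM hQ => le_trans hQ
        (mul_le_mul_of_nonneg_left (fmono x y hx hxy hyM) (by linarith)))
    have hss3 : s ≤ s3 := by
      by_cases h3 : s3 ≤ M
      · have hQ3 : b ≤ (1 - p) * f s3 := (hs3iff s3 hs31 h3).mp le_rfl
        have : a ≤ p * f s3 := by nlinarith
        exact (hsiff s3 hs31 h3).mpr this
      · omega
    refine ⟨s, s3, hs1, hss3, hs3M1, ?_, ?_, ?_, ?_⟩
    · intro x hx1 hxM hxs
      have hQ : ¬ a ≤ p * f x := fun h => by
        have := (hsiff x hx1 hxM).mpr h; omega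
      push_neg at hQ
      have h10 : F1 M p G P B U V x ≤ F0 M U V x := by
        have := cmp10 x; linarith
      have h20 : F2 p G P P3G B U V x ≤ F0 M U V x := by
        have := cmp20 x
        have hfx : p * f x < a := hQ
        nlinarith
      exact (max_eq_left (max_le h10 h20)).symm
    · intro x hsx hxs3 hxM
      have hx1 : 1 ≤ x := le_trans hs1 hsx
      have hA : a ≤ p * f x := (hsiff x hx1 hxM).mp hsx
      have hBn : ¬ b ≤ (1 - p) * f x := fun h => by
        have := (hs3iff x hx1 hxM).mpr h; omega
      push_neg at hBn
      have h01 : F0 M U V x ≤ F1 M p G P B U V x := by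
        have := cmp10 x; linarith
      have h21 : F2 p G P P3G B U V x ≤ F1 M p G P B U V x := by
        have := cmp21 x; linarith
      rw [max_eq_left h21, max_eq_right h01]
    · intro x hs3x hxM
      have hx1 : 1 ≤ x := le_trans hs31 hs3x
      have hB : b ≤ (1 - p) * f x := (hs3iff x hx1 hxM).mp hs3x
      have h12 : F1 M p G P B U V x ≤ F2 p G P P3G B U V x := by
        have := cmp21 x; linarith
      have h02 : F0 M U V x ≤ F2 p G P P3G B U V x := by
        have := cmp20 x
        nlinarith
      rw [max_eq_right h12, max_eq_right h02]
    · intro h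
      exact absurd hcase (not_le.mpr (hequiv.mp h))
  · -- the two thresholds collapse
    push_neg at hcase
    obtain ⟨s, hs1, hsM1, hsiff⟩ := thresh_exists M (fun x => a + b ≤ f x)
      (fun x y hx hxy hyM hQ => le_trans hQ (fmono x y hx hxy hyM))
    refine ⟨s, s, hs1, le_rfl, hsM1, ?_, ?_, ?_, fun _ => rfl⟩
    · intro x hx1 hxM hxs
      have hQ : ¬ a + b ≤ f x := fun h => by
        have := (hsiff x hx1 hxM).mpr h; omega
      push_neg at hQ
      have h20 : F2 p G P P3G B U V x ≤ F0 M U V x := by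
        have := cmp20 x; linarith
      have h10 : F1 M p G P B U V x ≤ F0 M U V x := by
        have := cmp10 x; nlinarith
      exact (max_eq_left (max_le h10 h20)).symm
    · intro x hsx hxs _; omega
    · intro x hsx hxM
      have hx1 : 1 ≤ x := le_trans hs1 hsx
      have hQ : a + b ≤ f x := (hsiff x hx1 hxM).mp hsx
      have h02 : F0 M U V x ≤ F2 p G P P3G B U V x := by
        have := cmp20 x; linarith
      have h12 : F1 M p G P B U V x ≤ F2 p G P P3G B U V x := by
        have := cmp21 x; nlinarith
      rw [max_eq_right h12, max_eq_right h02]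
end

section
/- Let M ≥ 2 be an integer, U : {1,...,M} → ℝ nonincreasing, and C ∈ ℝ. For integers 1 ≤ s ≤ M define f(s) = ( Σ_{i=1}^{s} U(i) − C ) / s, the expected average reward of the pure-3G threshold-s policy with total per-cycle cost C. Suppose the set S = { s ∈ {1,...,M−1} : Σ_{i=1}^{s} U(i) − s·U(s+1) ≥ C } is nonempty and let s₀ = min S. Then f(s₀) ≥ f(s) for every s ∈ {1,...,M}, i.e. the optimal threshold is s₀ = min{ s : Σ_{i=1}^{s} U(i) − s·U(s+1) ≥ C }. -/
open Finset

/-!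
Write `f = avgReward U C` and `g = excessReward U`. Comparing
`f(n+1) = (Σ_{i ≤ n} U(i) + U(n+1) − C)/(n+1)` with `f(n)` shows `f(n+1) ≤ f(n)` exactly when
`C ≤ g(n)`. Since `g(n+1) − g(n) = (n+1)(U(n+1) − U(n+2)) ≥ 0` for nonincreasing `U`, the
condition `C ≤ g(n)` fails below `s₀` and holds from `s₀` on, so `f` rises up to `s₀` and
falls after it.
-/

lemma add_div_add_one_le_div_iff {x u n : ℝ} (hn : 0 < n) :
    (x + u) / (n + 1) ≤ x / n ↔ n * u ≤ x := by
  rw [div_le_div_iff₀ (by linarith) hn]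
  constructor <;> intro h <;> linarith

section AverageReward

variable (U : ℕ → ℝ) (C : ℝ)

noncomputable def avgReward (n : ℕ) : ℝ := ((∑ i ∈ Icc 1 n, U i) - C) / n

def excessReward (n : ℕ) : ℝ := (∑ i ∈ Icc 1 n, U i) - n * U (n + 1)

variable {U C}

lemma avgReward_succ_le_iff {n : ℕ} (hn : 1 ≤ n) :
    avgReward U C (n + 1) ≤ avgReward U C n ↔ C ≤ excessReward U n := by
  have hpos : (0 : ℝ) < n := by exact_mod_cast hn
  rw [avgReward, avgReward, sum_Icc_succ_top (by omega), Nat.cast_succ, add_sub_right_comm,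
    add_div_add_one_le_div_iff hpos, excessReward, le_sub_comm]

lemma excessReward_le_succ (n : ℕ) (hU : U (n + 2) ≤ U (n + 1)) :
    excessReward U n ≤ excessReward U (n + 1) := by
  have hgap : ((n : ℝ) + 1) * U (n + 2) ≤ ((n : ℝ) + 1) * U (n + 1) :=
    mul_le_mul_of_nonneg_left hU (by positivity)
  rw [excessReward, excessReward, sum_Icc_succ_top (by omega), Nat.cast_succ]
  linarith

lemma excessReward_monotoneOn {M : ℕ} (hU : AntitoneOn U (Set.Icc 1 M)) :
    MonotoneOn (excessReward U) (Set.Iic (M - 1)) :=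
  monotoneOn_of_le_succ Set.ordConnected_Iic fun n _ _ hn ↦ by
    have hn : n + 2 ≤ M := by simp only [Order.succ_eq_add_one, Set.mem_Iic] at hn; omega
    exact excessReward_le_succ n (hU ⟨by omega, by omega⟩ ⟨by omega, hn⟩ (by omega))

lemma avgReward_antitoneOn {M s₀ : ℕ} (hU : AntitoneOn U (Set.Icc 1 M)) (hs₀ : 1 ≤ s₀)
    (hC : C ≤ excessReward U s₀) : AntitoneOn (avgReward U C) (Set.Icc s₀ M) :=
  antitoneOn_of_succ_le Set.ordConnected_Icc fun n _ hn hn' ↦ by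
    simp only [Order.succ_eq_add_one, Set.mem_Icc] at hn hn' ⊢
    refine (avgReward_succ_le_iff (by omega)).2 (hC.trans ?_)
    exact excessReward_monotoneOn hU (by simp only [Set.mem_Iic]; omega)
      (by simp only [Set.mem_Iic]; omega) hn.1

lemma avgReward_monotoneOn {s₀ : ℕ} (hC : ∀ n, 1 ≤ n → n < s₀ → excessReward U n < C) :
    MonotoneOn (avgReward U C) (Set.Icc 1 s₀) :=
  monotoneOn_of_le_succ Set.ordConnected_Icc fun n _ hn hn' ↦ by
    simp only [Order.succ_eq_add_one, Set.mem_Icc] at hn hn'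
    exact not_lt.1 fun h ↦ (hC n hn.1 (by omega)).not_ge ((avgReward_succ_le_iff hn.1).1 h.le)

end AverageReward

theorem pure_3G_optimal_threshold_general (M : ℕ) (U : ℕ → ℝ) (C : ℝ) (s₀ : ℕ)
    (hU : ∀ ⦃x y : ℕ⦄, 1 ≤ x → x ≤ y → y ≤ M → U y ≤ U x)
    (hleast : IsLeast {s : ℕ | 1 ≤ s ∧ s ≤ M - 1 ∧
      C ≤ (∑ i ∈ Finset.Icc 1 s, U i) - (s : ℝ) * U (s + 1)} s₀) :
    ∀ s : ℕ, 1 ≤ s → s ≤ M →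
      ((∑ i ∈ Finset.Icc 1 s, U i) - C) / (s : ℝ)
        ≤ ((∑ i ∈ Finset.Icc 1 s₀, U i) - C) / (s₀ : ℝ) := by
  obtain ⟨⟨hs₀, hs₀M, hC⟩, hmin⟩ := hleast
  have hU' : AntitoneOn U (Set.Icc 1 M) := fun x hx y hy hxy ↦ hU hx.1 hxy hy.2
  have hbelow : ∀ n, 1 ≤ n → n < s₀ → excessReward U n < C := fun n hn hns₀ ↦
    not_le.1 fun h ↦ (hmin ⟨hn, by omega, h⟩).not_gt hns₀
  intro s hs hsM
  change avgReward U C s ≤ avgReward U C s₀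
  rcases le_total s s₀ with hss₀ | hs₀s
  · exact avgReward_monotoneOn hbelow ⟨hs, hss₀⟩ ⟨hs₀, le_rfl⟩ hss₀
  · exact avgReward_antitoneOn hU' hs₀ hC ⟨le_rfl, by omega⟩ ⟨hs₀s, hsM⟩ hs₀s

/-- Optimal threshold for the pure-3G policy: with per-cycle cost `C` and
expected average reward `f(s) = (Σ_{i=1}^{s} U(i) − C)/s`, if
`s₀ = min { s ∈ {1,...,M−1} : Σ_{i=1}^{s} U(i) − s·U(s+1) ≥ C }` exists, then
`f(s₀) ≥ f(s)` for every `s ∈ {1,...,M}`. -/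
theorem pure_3G_optimal_threshold (M : ℕ) (U : ℕ → ℝ) (C : ℝ) (s₀ : ℕ)
    (hM : 2 ≤ M)
    (hU : ∀ ⦃x y : ℕ⦄, 1 ≤ x → x ≤ y → y ≤ M → U y ≤ U x)
    (hleast : IsLeast {s : ℕ | 1 ≤ s ∧ s ≤ M - 1 ∧
      C ≤ (∑ i ∈ Finset.Icc 1 s, U i) - (s : ℝ) * U (s + 1)} s₀) :
    ∀ s : ℕ, 1 ≤ s → s ≤ M →
      ((∑ i ∈ Finset.Icc 1 s, U i) - C) / (s : ℝ)
        ≤ ((∑ i ∈ Finset.Icc 1 s₀, U i) - C) / (s₀ : ℝ) :=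
  pure_3G_optimal_threshold_general M U C s₀ hU hleast
end
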